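/- arXiv:1209.4332 — 7 statements merged into one kernel-verified Lean document; each statement's English description precedes it below -/
import Mathlib

section
/- Let X be an infinite-dimensional real Banach space. Then dens(X) ≤ 2^{biort(X)}, where the exponent is the supremum of cardinalities of biorthogonal systems in X × X*. -/
/-!
Take, by Zorn's lemma, a maximal biorthogonal system `(xₘ, fₘ)_{m ∈ M}` and let `K` be the closed
span of the `xₘ`. By Hahn–Banach, maximality forces every vector killed by all the `fₘ` into `K`,
and it makes `M` infinite when `X` is infinite-dimensional. The fibres of `v ↦ (fₘ v)ₘ` are
translates of subsets of `K`, so `#X ≤ 𝔠 ^ #M * #K`; and `#K ≤ (#M * 𝔠) ^ ℵ₀` because `K` is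
the sequential closure of the linear span. Both factors are at most
`2 ^ #M ≤ 2 ^ biort X`, and `dens X ≤ #X`.
-/

open Cardinal Set Topology

universe u

noncomputable section

/-- The spread of a topological space: the supremum of cardinalities of discrete subspaces. -/
def spread (Z : Type u) [TopologicalSpace Z] : Cardinal.{u} :=
  ⨆ D : {D : Set Z // DiscreteTopology D}, #D.1

/-- The density of a topological space: the least cardinality of a dense subset. -/
def densityCard (Z : Type u) [TopologicalSpace Z] : Cardinal.{u} :=
  ⨅ D : {D : Set Z // Dense D}, #D.1

/-- The hereditary density: the supremum of the densities of all subspaces. -/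
def hdens (Z : Type u) [TopologicalSpace Z] : Cardinal.{u} :=
  ⨆ S : Set Z, densityCard S

/-- The Lindelöf degree: the least cardinal κ such that every open cover
has a subcover of cardinality at most κ. -/
def lindelofDeg (Z : Type u) [TopologicalSpace Z] : Cardinal.{u} :=
  sInf {κ | ∀ (ι : Type u) (U : ι → Set Z), (∀ i, IsOpen (U i)) → (⋃ i, U i) = Set.univ →
    ∃ t : Set ι, #t ≤ κ ∧ (⋃ i ∈ t, U i) = Set.univ}

/-- The hereditary Lindelöf degree: the supremum of the Lindelöf degrees of all subspaces. -/
def hLindelof (Z : Type u) [TopologicalSpace Z] : Cardinal.{u} :=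
  ⨆ S : Set Z, lindelofDeg S

/-- A biorthogonal system `(x_i, f_i)_{i ∈ I} ⊆ X × X*`. -/
def IsBiorthSys {X : Type u} [NormedAddCommGroup X] [NormedSpace ℝ X] {I : Type u}
    (x : I → X) (f : I → (X →L[ℝ] ℝ)) : Prop :=
  (∀ i, f i (x i) = 1) ∧ ∀ i j, i ≠ j → f i (x j) = 0

/-- `biort X`: the supremum of cardinalities of biorthogonal systems in `X × X*`. -/
def biort (X : Type u) [NormedAddCommGroup X] [NormedSpace ℝ X] : Cardinal.{u} :=
  sSup {c | ∃ (I : Type u) (x : I → X) (f : I → (X →L[ℝ] ℝ)), IsBiorthSys x f ∧ c = #I}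

theorem mk_closure_le_mk_pow_aleph0 {Z : Type u} [TopologicalSpace Z] [FrechetUrysohnSpace Z]
    [T2Space Z] (s : Set Z) : #(closure s) ≤ #s ^ ℵ₀ := by
  have hseq (y : closure s) :
      ∃ g : ℕ → s, Filter.Tendsto (fun n => (g n : Z)) Filter.atTop (𝓝 y) := by
    obtain ⟨g, hgs, hg⟩ := mem_closure_iff_seq_limit.mp y.2
    exact ⟨fun n => ⟨g n, hgs n⟩, hg⟩
  choose G hG using hseq
  have hG_inj : Function.Injective G := fun y z h =>
    Subtype.ext <| tendsto_nhds_unique (hG y) (h ▸ hG z)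
  simpa using mk_le_of_injective hG_inj

theorem mk_span_le_max_continuum {V : Type u} [AddCommGroup V] [Module ℝ V] (s : Set V) :
    #(Submodule.span ℝ s) ≤ max #s 𝔠 := by
  rcases s.eq_empty_or_nonempty with rfl | hs
  · simp [one_le_aleph0.trans aleph0_le_continuum]
  have : Nonempty s := hs.to_subtype
  calc #(Submodule.span ℝ s)
      = #(LinearMap.range (Finsupp.linearCombination ℝ ((↑) : s → V))) := by
        rw [Finsupp.range_linearCombination, Subtype.range_coe]
    _ ≤ #(s →₀ ℝ) := mk_le_of_surjective (LinearMap.surjective_rangeRestrict _)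
    _ = max #s 𝔠 := by simp [mk_finsupp_lift_of_infinite', mk_real]

theorem mk_le_mk_mul_mk_ker {G H : Type u} [AddGroup G] [AddGroup H] (f : G →+ H) :
    #G ≤ #H * #f.ker := by
  refine mk_le_mk_mul_of_mk_preimage_le f fun b => ?_
  rcases (f ⁻¹' {b}).eq_empty_or_nonempty with h | ⟨a, ha⟩
  · simp [h]
  refine mk_le_of_injective (f := fun x : f ⁻¹' {b} => (⟨-a + x, ?_⟩ : f.ker)) ?_
  · have hx : f x = b := x.2
    have ha : f a = b := ha
    simp [AddMonoidHom.mem_ker, ha, hx]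
  · intro x y h; exact Subtype.ext (by simpa using h)

theorem exists_dual_eq_one_and_le_ker {𝕜 E : Type*} [RCLike 𝕜] [NormedAddCommGroup E]
    [NormedSpace 𝕜 E] {K : Submodule 𝕜 E} (hK : IsClosed (K : Set E)) {x : E} (hx : x ∉ K) :
    ∃ f : E →L[𝕜] 𝕜, f x = 1 ∧ K ≤ LinearMap.ker (f : E →ₗ[𝕜] 𝕜) := by
  have : IsClosed (K : Set E) := hK
  obtain ⟨g, hg⟩ := SeparatingDual.exists_eq_one (R := 𝕜) (x := K.mkQ x)
    (by simpa [Submodule.Quotient.mk_eq_zero] using hx)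
  exact ⟨g.comp K.mkQL, hg, fun y hy => by simp [(Submodule.Quotient.mk_eq_zero K).mpr hy]⟩

section Biorthogonal

variable {X : Type u} [NormedAddCommGroup X] [NormedSpace ℝ X]

theorem IsBiorthSys.injective {I : Type u} {x : I → X} {f : I → (X →L[ℝ] ℝ)}
    (h : IsBiorthSys x f) : Function.Injective x := by
  intro i j hij
  by_contra hne
  have := h.2 i j hne
  rw [← hij, h.1 i] at this
  exact one_ne_zero this

theorem IsBiorthSys.mk_le_biort {I : Type u} {x : I → X} {f : I → (X →L[ℝ] ℝ)}
    (h : IsBiorthSys x f) : #I ≤ biort X := by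
  have hbdd : BddAbove {c | ∃ (I : Type u) (x : I → X) (f : I → (X →L[ℝ] ℝ)),
      IsBiorthSys x f ∧ c = #I} := by
    refine ⟨#X, ?_⟩
    rintro _ ⟨J, y, g, hyg, rfl⟩
    exact mk_le_of_injective hyg.injective
  exact le_csSup hbdd ⟨I, x, f, h, rfl⟩

-- A biorthogonal system indexed by its own set of pairs `(x, f)`, so that Zorn's lemma applies.
def IsBiorthSet (M : Set (X × (X →L[ℝ] ℝ))) : Prop :=
  (∀ p ∈ M, p.2 p.1 = 1) ∧ M.Pairwise fun p q => p.2 q.1 = 0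

theorem IsBiorthSet.mk_le_biort {M : Set (X × (X →L[ℝ] ℝ))} (hM : IsBiorthSet M) :
    #M ≤ biort X :=
  IsBiorthSys.mk_le_biort (x := fun p : M => p.1.1) (f := fun p : M => p.1.2)
    ⟨fun p => hM.1 p.1 p.2, fun p q hpq => hM.2 p.2 q.2 (Subtype.coe_ne_coe.mpr hpq)⟩

theorem exists_maximal_isBiorthSet : ∃ M : Set (X × (X →L[ℝ] ℝ)), Maximal IsBiorthSet M := by
  refine zorn_subset {M | IsBiorthSet M} fun c hc hchain =>
    ⟨⋃₀ c, ⟨?_, ?_⟩, fun s hs => subset_sUnion_of_mem hs⟩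
  · rintro p ⟨s, hs, hp⟩
    exact (hc hs).1 p hp
  · exact hchain.pairwise_sUnion.mpr fun s hs => (hc hs).2

def biorthCoeffs (M : Set (X × (X →L[ℝ] ℝ))) : X →ₗ[ℝ] (M → ℝ) :=
  LinearMap.pi fun p : M => (p.1.2 : X →ₗ[ℝ] ℝ)

theorem ker_biorthCoeffs_le_of_maximal {M : Set (X × (X →L[ℝ] ℝ))} (hM : Maximal IsBiorthSet M) :
    LinearMap.ker (biorthCoeffs M) ≤ (Submodule.span ℝ (Prod.fst '' M)).topologicalClosure := by
  intro z hz
  have hzM (p) (hp : p ∈ M) : p.2 z = 0 := congrFun hz ⟨p, hp⟩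
  by_contra hzK
  obtain ⟨f, hfz, hfK⟩ :=
    exists_dual_eq_one_and_le_ker (Submodule.isClosed_topologicalClosure _) hzK
  have hfM (p) (hp : p ∈ M) : f p.1 = 0 :=
    hfK (Submodule.le_topologicalClosure _ (Submodule.subset_span ⟨p, hp, rfl⟩))
  have hnew : (z, f) ∉ M := fun h => by simpa [hzM _ h] using hM.1.1 _ h
  have hins : IsBiorthSet (insert (z, f) M) := by
    refine ⟨?_, hM.1.2.insert fun q hq _ => ⟨?_, ?_⟩⟩
    · rintro p (rfl | hp)
      exacts [hfz, hM.1.1 p hp]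
    · exact hfM q hq
    · exact hzM q hq
  exact hnew (hM.2 hins (subset_insert _ _) (mem_insert _ _))

theorem infinite_of_maximal (hX : ¬ FiniteDimensional ℝ X) {M : Set (X × (X →L[ℝ] ℝ))}
    (hM : Maximal IsBiorthSet M) : M.Infinite := by
  intro hfin
  have : Finite M := hfin
  set K := Submodule.span ℝ (Prod.fst '' M)
  have : FiniteDimensional ℝ K := FiniteDimensional.span_of_finite ℝ (hfin.image _)
  have hKclosed : K.topologicalClosure = K :=
    (Submodule.closed_of_finiteDimensional K).submodule_topologicalClosure_eq
  have : FiniteDimensional ℝ (LinearMap.ker (biorthCoeffs M)) :=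
    Submodule.finiteDimensional_of_le (hKclosed ▸ ker_biorthCoeffs_le_of_maximal hM)
  refine hX (Module.rank_lt_aleph0_iff.mp ?_)
  rw [← (biorthCoeffs M).rank_range_add_rank_ker]
  exact add_lt_aleph0 (Module.rank_lt_aleph0 _ _) (Module.rank_lt_aleph0 _ _)

theorem mk_le_two_pow_of_maximal {M : Set (X × (X →L[ℝ] ℝ))} (hM : Maximal IsBiorthSet M)
    (hinf : M.Infinite) : #X ≤ 2 ^ #M := by
  have hκ : ℵ₀ ≤ #M := infinite_iff.mp hinf.to_subtype
  have hcont : 𝔠 ≤ 2 ^ #M := two_power_aleph0 ▸ power_le_power_left two_ne_zero hκ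
  have hspan : #(Submodule.span ℝ (Prod.fst '' M)) ≤ 2 ^ #M :=
    (mk_span_le_max_continuum _).trans (max_le (mk_image_le.trans (cantor _).le) hcont)
  have hclosure : #((Submodule.span ℝ (Prod.fst '' M)).topologicalClosure) ≤ 2 ^ #M :=
    calc _ ≤ #(Submodule.span ℝ (Prod.fst '' M)) ^ ℵ₀ := mk_closure_le_mk_pow_aleph0 _
      _ ≤ (2 ^ #M) ^ ℵ₀ := power_le_power_right hspan
      _ = 2 ^ #M := by rw [← power_mul, mul_aleph0_eq hκ]
  have hcoeffs : #(M → ℝ) = 2 ^ #M := by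
    rw [mk_arrow, mk_real, lift_continuum, lift_uzero, ← two_power_aleph0, ← power_mul,
      aleph0_mul_eq hκ]
  calc #X ≤ #(M → ℝ) * #(biorthCoeffs M).toAddMonoidHom.ker := mk_le_mk_mul_mk_ker _
    _ ≤ 2 ^ #M * 2 ^ #M := mul_le_mul' hcoeffs.le
        ((mk_le_mk_of_subset (ker_biorthCoeffs_le_of_maximal hM)).trans hclosure)
    _ = 2 ^ #M := mul_eq_self (aleph0_le_continuum.trans hcont)

theorem mk_le_two_pow_biort (hX : ¬ FiniteDimensional ℝ X) : #X ≤ 2 ^ biort X := by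
  obtain ⟨M, hM⟩ := exists_maximal_isBiorthSet (X := X)
  exact (mk_le_two_pow_of_maximal hM (infinite_of_maximal hX hM)).trans
    (power_le_power_left two_ne_zero hM.1.mk_le_biort)

end Biorthogonal

theorem densityCard_le_mk (Z : Type u) [TopologicalSpace Z] : densityCard Z ≤ #Z :=
  (ciInf_le (OrderBot.bddBelow _) (⟨univ, dense_univ⟩ : {D : Set Z // Dense D})).trans_eq mk_univ

theorem stmt1_general (X : Type u) [NormedAddCommGroup X] [NormedSpace ℝ X]
    (hX : ¬ FiniteDimensional ℝ X) :
    densityCard X ≤ 2 ^ biort X :=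
  (densityCard_le_mk X).trans (mk_le_two_pow_biort hX)

/-- For an infinite-dimensional real Banach space `X`,
`dens(X) ≤ 2 ^ biort(X)`. -/
theorem stmt1 (X : Type u) [NormedAddCommGroup X] [NormedSpace ℝ X] [CompleteSpace X]
    (hX : ¬ FiniteDimensional ℝ X) :
    densityCard X ≤ 2 ^ biort X :=
  stmt1_general X hX

end
end

section
/- Let X be a real Banach space and κ an infinite cardinal such that dens(X) > 2^κ. Then X admits a biorthogonal system (x_α, x_α*)_{α<κ⁺} ⊆ X × X* of cardinality κ⁺ (the successor cardinal of κ). -/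
open Cardinal Set Topology

universe u

noncomputable section

lemma exists_biorth_step {X : Type u} [NormedAddCommGroup X] [NormedSpace ℝ X]
    {κ : Cardinal.{u}} (hκ : ℵ₀ ≤ κ) (h : 2 ^ κ < densityCard X)
    {J : Type u} (hJ : #J ≤ κ) (xs : J → X) (fs : J → X →L[ℝ] ℝ) :
    ∃ p : X × (X →L[ℝ] ℝ), p.2 p.1 = 1 ∧ (∀ j, p.2 (xs j) = 0) ∧ (∀ j, fs j p.1 = 0) := by
  classical
  set M : Submodule ℝ X := (Submodule.span ℝ (Set.range xs)).topologicalClosure with hM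
  set M₀ : Set X := (Submodule.span ℝ (Set.range xs) : Set X) with hM₀
  have hpow : ∀ (A : Type u), #A ≤ κ → #(A → ℝ) ≤ 2 ^ κ := by
    intro A hA
    rw [Cardinal.mk_arrow, Cardinal.mk_real, Cardinal.lift_continuum, Cardinal.lift_uzero,
      ← Cardinal.two_power_aleph0]
    calc (2 ^ ℵ₀ : Cardinal.{u}) ^ #A ≤ (2 ^ ℵ₀) ^ κ :=
          Cardinal.power_le_power_left (Cardinal.power_ne_zero _ two_ne_zero) hA
      _ = 2 ^ (ℵ₀ * κ) := (Cardinal.power_mul).symm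
      _ ≤ 2 ^ κ := by
          rw [Cardinal.aleph0_mul_eq hκ]
  by_cases hZ : ∃ y : X, (∀ j, fs j y = 0) ∧ y ∉ (M : Set X)
  · obtain ⟨y, hy1, hy2⟩ := hZ
    obtain ⟨f, u, hfu, hux⟩ := geometric_hahn_banach_closed_point
      (M.convex) ((Submodule.span ℝ (Set.range xs)).isClosed_topologicalClosure) hy2
    have hu0 : 0 < u := by simpa using hfu 0 (M.zero_mem)
    have hf0 : ∀ z ∈ M, f z = 0 := by
      intro z hz
      by_contra hfz
      have h1 : f (((u + 1) / f z) • z) < u := hfu _ (M.smul_mem _ hz)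
      rw [map_smul, smul_eq_mul, div_mul_cancel₀ _ hfz] at h1
      linarith
    have hfy : f y ≠ 0 := (hu0.trans hux).ne'
    refine ⟨⟨y, (f y)⁻¹ • f⟩, ?_, ?_, ?_⟩
    · simp [inv_mul_cancel₀ hfy]
    · intro j
      have : xs j ∈ M := Submodule.le_topologicalClosure _ (Submodule.subset_span ⟨j, rfl⟩)
      simp [hf0 _ this]
    · exact hy1
  · exfalso
    push_neg at hZ
    set T : X → (J → ℝ) := fun y j => fs j y with hT
    set sec : Set.range T → X := fun v => v.2.choose with hsec
    have hsec_spec : ∀ v : Set.range T, T (sec v) = v := fun v => v.2.choose_spec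
    set D : Set X := Set.range (fun p : Set.range T × M₀ => sec p.1 + (p.2 : X)) with hD
    have hdense : Dense D := by
      intro x
      set w := sec ⟨T x, Set.mem_range_self x⟩ with hw
      have hTw : T w = T x := hsec_spec _
      have hxw : x - w ∈ (M : Set X) := by
        refine hZ _ (fun j => ?_)
        have := congrFun hTw j
        simp only [hT] at this
        simp [map_sub, this]
      have hMc : (M : Set X) = closure M₀ := Submodule.topologicalClosure_coe _
      rw [hMc] at hxw
      have : x ∈ (Homeomorph.addLeft w) '' closure M₀ := ⟨x - w, hxw, by simp⟩
      rw [Homeomorph.image_closure] at this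
      refine closure_mono ?_ this
      rintro z ⟨d, hd, rfl⟩
      exact ⟨(⟨⟨T x, Set.mem_range_self x⟩, ⟨d, hd⟩⟩ : Set.range T × M₀), rfl⟩
    have hS : #(Set.range T) ≤ 2 ^ κ := (Cardinal.mk_set_le _).trans (hpow J hJ)
    have hM₀card : #M₀ ≤ 2 ^ κ := by
      have h1 : M₀ = Set.range ⇑(Finsupp.linearCombination ℝ ((↑) : Set.range xs → X)) := by
        rw [hM₀, Finsupp.span_eq_range_linearCombination]
        rfl
      rw [h1]
      refine Cardinal.mk_range_le.trans ?_
      refine (Cardinal.mk_le_of_injective (DFunLike.coe_injective :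
        Function.Injective (⇑· : (Set.range xs →₀ ℝ) → (Set.range xs → ℝ)))).trans ?_
      exact hpow _ (Cardinal.mk_range_le.trans hJ)
    have hcard : #D ≤ 2 ^ κ := by
      refine Cardinal.mk_range_le.trans ?_
      rw [Cardinal.mk_prod, Cardinal.lift_id, Cardinal.lift_id]
      calc #(Set.range T) * #M₀ ≤ 2 ^ κ * 2 ^ κ := mul_le_mul' hS hM₀card
        _ = 2 ^ (κ + κ) := (Cardinal.power_add 2 κ κ).symm
        _ = 2 ^ κ := by rw [Cardinal.add_eq_self hκ]
    have hdle : densityCard X ≤ #D := csInf_le (OrderBot.bddBelow _) ⟨⟨D, hdense⟩, rfl⟩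
    exact absurd (hdle.trans hcard) (not_le.mpr h)

/-- If `X` is a real Banach space and `κ` an infinite cardinal with
`dens(X) > 2 ^ κ`, then `X` has a biorthogonal system of cardinality `κ⁺`. -/
theorem stmt2 (X : Type u) [NormedAddCommGroup X] [NormedSpace ℝ X] [CompleteSpace X]
    (κ : Cardinal.{u}) (hκ : ℵ₀ ≤ κ) (h : 2 ^ κ < densityCard X) :
    ∃ (I : Type u) (x : I → X) (f : I → (X →L[ℝ] ℝ)),
      IsBiorthSys x f ∧ #I = Order.succ κ := by
  classical
  set I : Type u := (Order.succ κ).ord.ToType with hI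
  have hwf : WellFounded ((· < ·) : I → I → Prop) := (IsWellFounded.wf)
  have hsmall : ∀ i : I, #(Set.Iio i) ≤ κ := by
    intro i
    have := Cardinal.mk_Iio_ord_toType i
    exact Order.lt_succ_iff.mp this
  have key : ∀ (i : I) (g : ∀ j : I, j < i → X × (X →L[ℝ] ℝ)),
      ∃ p : X × (X →L[ℝ] ℝ), p.2 p.1 = 1 ∧
        (∀ (j : Set.Iio i), p.2 (g j.1 j.2).1 = 0) ∧
        (∀ (j : Set.Iio i), (g j.1 j.2).2 p.1 = 0) := by
    intro i g
    exact exists_biorth_step hκ h (hsmall i)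
      (fun j : Set.Iio i => (g j.1 j.2).1) (fun j : Set.Iio i => (g j.1 j.2).2)
  set F : I → X × (X →L[ℝ] ℝ) :=
    hwf.fix (fun i rec => (key i rec).choose) with hF
  have hFeq : ∀ i : I, F i = (key i (fun j _ => F j)).choose := fun i =>
    hwf.fix_eq _ i
  have hprop : ∀ i : I, (F i).2 (F i).1 = 1 ∧
      (∀ j : I, j < i → (F i).2 (F j).1 = 0 ∧ (F j).2 (F i).1 = 0) := by
    intro i
    have hs := (key i (fun j _ => F j)).choose_spec
    rw [← hFeq i] at hs
    exact ⟨hs.1, fun j hj => ⟨hs.2.1 ⟨j, hj⟩, hs.2.2 ⟨j, hj⟩⟩⟩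
  refine ⟨I, fun i => (F i).1, fun i => (F i).2, ⟨fun i => (hprop i).1, ?_⟩, ?_⟩
  · intro i j hij
    rcases lt_or_gt_of_ne hij with hlt | hgt
    · exact ((hprop j).2 i hlt).2
    · exact ((hprop i).2 j hgt).1
  · exact Cardinal.mk_ord_toType _


end
end

section
/- Let K be a compact Hausdorff space. Then biort_1(C(K)) = s(K): the supremum of cardinalities of biorthogonal systems (f_i, μ_i)_{i∈I} ⊆ C(K) × M(K) in which every μ_i is 1-supported equals the spread of K. -/
open Cardinal Set Topology

universe u

noncomputable section

/-- An `n`-supported functional on `C(K, ℝ)`: a linear combination of `n` point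
evaluations (Dirac measures). -/
def NSupported (K : Type u) [TopologicalSpace K] [CompactSpace K] (n : ℕ)
    (μ : C(K, ℝ) →L[ℝ] ℝ) : Prop :=
  ∃ (x : Fin n → K) (a : Fin n → ℝ), μ = ∑ i, a i • ContinuousMap.evalCLM ℝ (x i)

/-- `biortN K n`: the supremum of cardinalities of biorthogonal systems in
`C(K) × M(K)` all of whose functionals are `n`-supported. -/
def biortN (K : Type u) [TopologicalSpace K] [CompactSpace K] (n : ℕ) : Cardinal.{u} :=
  sSup {c | ∃ (I : Type u) (f : I → C(K, ℝ)) (μ : I → (C(K, ℝ) →L[ℝ] ℝ)),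
    IsBiorthSys f μ ∧ (∀ i, NSupported K n (μ i)) ∧ c = #I}

/-!
In a biorthogonal system `(f_i, a_i δ_{x_i})` we have `a_i f_i(x_i) = 1` and `f_i(x_j) = 0` for
`j ≠ i`, so the open set `{f_i ≠ 0}` meets `{x_j}` exactly in `x_i`: the points `x_i` are distinct
and form a discrete subspace. Conversely, for a discrete `D ⊆ K` complete regularity gives, for
each `d ∈ D`, a continuous `g_d` with `g_d(d) = 1` vanishing on `D \ {d}`, and `(g_d, δ_d)` is a
biorthogonal system.
-/

theorem mk_le_spread {X : Type u} [TopologicalSpace X] (D : Set X) [DiscreteTopology D] :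
    #D ≤ spread X :=
  le_ciSup bddAbove_of_small (⟨D, ‹_›⟩ : {D : Set X // DiscreteTopology D})

theorem mk_le_spread_of_separating {X I : Type u} [TopologicalSpace X] (x : I → X)
    (f : I → C(X, ℝ)) (hne : ∀ i, f i (x i) ≠ 0) (hzero : ∀ i j, i ≠ j → f i (x j) = 0) :
    #I ≤ spread X := by
  have hinj : Function.Injective x := fun i j hij => by
    by_contra hij'
    exact hne i (hij ▸ hzero i j hij')
  have hdisc : DiscreteTopology (range x) := by
    refine discreteTopology_subtype_iff'.mpr ?_
    rintro _ ⟨i, rfl⟩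
    refine ⟨f i ⁻¹' {0}ᶜ, isOpen_compl_singleton.preimage (f i).continuous, ?_⟩
    ext y
    constructor
    · rintro ⟨hy, j, rfl⟩
      by_contra hji
      exact hy (hzero i j fun hij => hji (congrArg x hij.symm))
    · rintro rfl
      exact ⟨hne i, i, rfl⟩
  calc #I = #(range x) := (mk_range_eq x hinj).symm
    _ ≤ spread X := mk_le_spread _

section CompactSpace

variable {K : Type u} [TopologicalSpace K] [CompactSpace K]

theorem nSupported_one_iff {μ : C(K, ℝ) →L[ℝ] ℝ} :
    NSupported K 1 μ ↔ ∃ (x : K) (a : ℝ), μ = a • ContinuousMap.evalCLM ℝ x := by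
  simp only [NSupported, Fin.sum_univ_one]
  exact ⟨fun ⟨x, a, h⟩ => ⟨x 0, a 0, h⟩, fun ⟨x, a, h⟩ => ⟨fun _ => x, fun _ => a, h⟩⟩

theorem mk_le_spread_of_isBiorthSys_nSupported_one {I : Type u} {f : I → C(K, ℝ)}
    {μ : I → (C(K, ℝ) →L[ℝ] ℝ)} (hb : IsBiorthSys f μ) (h1 : ∀ i, NSupported K 1 (μ i)) :
    #I ≤ spread K := by
  choose x a hμ using fun i => nSupported_one_iff.mp (h1 i)
  have hμ_apply : ∀ i g, μ i g = a i * g (x i) := fun i g => by simp [hμ]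
  have hdiag : ∀ i, a i * f i (x i) = 1 := fun i => hμ_apply i (f i) ▸ hb.1 i
  refine mk_le_spread_of_separating x f (fun i => right_ne_zero_of_mul_eq_one (hdiag i))
    fun i j hij => ?_
  have hoff : a j * f i (x j) = 0 := hμ_apply j (f i) ▸ hb.2 j i hij.symm
  exact (mul_eq_zero.mp hoff).resolve_left (left_ne_zero_of_mul_eq_one (hdiag j))

theorem biortN_one_le_spread : biortN K 1 ≤ spread K :=
  csSup_le' fun _ ⟨_, _, _, hb, h1, hc⟩ => hc ▸ mk_le_spread_of_isBiorthSys_nSupported_one hb h1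

end CompactSpace

theorem exists_continuousMap_eq_one_eq_zero_of_discreteTopology {X : Type u} [TopologicalSpace X]
    [CompletelyRegularSpace X] (D : Set X) [DiscreteTopology D] {d : X} (hd : d ∈ D) :
    ∃ g : C(X, ℝ), g d = 1 ∧ ∀ d' ∈ D, d' ≠ d → g d' = 0 := by
  obtain ⟨U, hU, hUD⟩ := discreteTopology_subtype_iff'.mp ‹_› d hd
  obtain ⟨h, hh, hhd, hhU⟩ :=
    CompletelyRegularSpace.completely_regular_isOpen d U hU (hUD.symm.subset rfl).1
  refine ⟨⟨fun y => 1 - (h y : ℝ), by fun_prop⟩, by simp [hhd], fun d' hd' hne => ?_⟩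
  have hd'U : d' ∉ U := fun hd'U => hne (hUD.subset ⟨hd'U, hd'⟩)
  simp [hhU hd'U]

theorem mk_le_biortN_one {K : Type u} [TopologicalSpace K] [CompactSpace K] [T2Space K]
    (D : Set K) [DiscreteTopology D] : #D ≤ biortN K 1 := by
  choose g hgd hgD using fun d : D =>
    exists_continuousMap_eq_one_eq_zero_of_discreteTopology D d.2
  refine le_csSup ⟨spread K, fun _ ⟨_, _, _, hb, h1, hc⟩ =>
    hc ▸ mk_le_spread_of_isBiorthSys_nSupported_one hb h1⟩
    ⟨D, g, fun d => ContinuousMap.evalCLM ℝ d, ⟨hgd, fun d d' hne => ?_⟩,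
      fun d => nSupported_one_iff.mpr ⟨d, 1, (one_smul _ _).symm⟩, rfl⟩
  exact hgD d' d d.2 (Subtype.coe_injective.ne hne)

/-- For a compact Hausdorff space `K`, `biort₁(C(K)) = s(K)`. -/
theorem stmt6 (K : Type u) [TopologicalSpace K] [CompactSpace K] [T2Space K] :
    biortN K 1 = spread K :=
  le_antisymm biortN_one_le_spread (ciSup_le' fun D => have := D.2; mk_le_biortN_one D.1)

end
end

section
/- Let K be an infinite compact Hausdorff space. Then hL(K²) = w(K), where K² carries the product topology. In particular, if K is not metrizable then hL(K²) is uncountable. -/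
open Cardinal Set Topology

universe u

noncomputable section

/-- The weight of a topological space: the least cardinality of a topological basis. -/
def topWeight (Z : Type u) [TopologicalSpace Z] : Cardinal.{u} :=
  ⨅ B : {B : Set (Set Z) // TopologicalSpace.IsTopologicalBasis B}, #B.1

/-! ### Auxiliary lemmas -/

lemma basis_inj {Z : Type u} [TopologicalSpace Z] [T0Space Z] {B : Set (Set Z)}
    (hB : TopologicalSpace.IsTopologicalBasis B) :
    Function.Injective (fun x : Z => {b : ↥B | x ∈ (b : Set Z)}) := by
  intro x y hxy
  refine Inseparable.eq ?_
  have h : ∀ b ∈ B, x ∈ b ↔ y ∈ b := by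
    intro b hb
    exact Set.ext_iff.mp hxy ⟨b, hb⟩
  have hx := hB.nhds_hasBasis (a := x)
  have hy := hB.nhds_hasBasis (a := y)
  refine le_antisymm ((hx.le_basis_iff hy).2 ?_) ((hy.le_basis_iff hx).2 ?_)
  · rintro b ⟨hb, hyb⟩
    exact ⟨b, ⟨hb, (h b hb).2 hyb⟩, subset_rfl⟩
  · rintro b ⟨hb, hxb⟩
    exact ⟨b, ⟨hb, (h b hb).1 hxb⟩, subset_rfl⟩

lemma basis_finite_of {Z : Type u} [TopologicalSpace Z] [T0Space Z] {B : Set (Set Z)}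
    (hB : TopologicalSpace.IsTopologicalBasis B) (hf : Finite ↥B) : Finite Z := by
  have : Finite (Set ↥B) := inferInstance
  exact Finite.of_injective _ (basis_inj hB)

lemma basis_infinite {Z : Type u} [TopologicalSpace Z] [T0Space Z] [Infinite Z] {B : Set (Set Z)}
    (hB : TopologicalSpace.IsTopologicalBasis B) : ℵ₀ ≤ #↥B := by
  by_contra hlt
  push_neg at hlt
  have : Finite ↥B := Cardinal.lt_aleph0_iff_finite.mp hlt
  have := basis_finite_of hB this
  exact not_finite Z

lemma mem_lindelofSet {Z : Type u} [TopologicalSpace Z] :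
    ((2 : Cardinal.{u}) ^ #Z) ∈ {κ | ∀ (ι : Type u) (U : ι → Set Z), (∀ i, IsOpen (U i)) →
    (⋃ i, U i) = Set.univ → ∃ t : Set ι, #t ≤ κ ∧ (⋃ i ∈ t, U i) = Set.univ} := by
  intro ι U _ hcov
  have hch : ∀ s : ↥(Set.range U), ∃ i, U i = (s : Set Z) := fun s => s.2
  choose f hf using hch
  refine ⟨Set.range f, ?_, ?_⟩
  · calc #↥(Set.range f) ≤ #↥(Set.range U) := Cardinal.mk_range_le
      _ ≤ #(Set Z) := le_trans (Cardinal.mk_le_mk_of_subset (Set.subset_univ _)) (by simp)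
      _ = 2 ^ #Z := Cardinal.mk_set
  · ext x
    simp only [Set.mem_iUnion, Set.mem_univ, iff_true]
    have : x ∈ ⋃ i, U i := hcov ▸ Set.mem_univ x
    obtain ⟨i, hi⟩ := Set.mem_iUnion.mp this
    exact ⟨f ⟨U i, Set.mem_range_self i⟩, ⟨_, rfl⟩, by rw [hf]; exact hi⟩

lemma lindelofDeg_spec {Z : Type u} [TopologicalSpace Z] :
    ∀ (ι : Type u) (U : ι → Set Z), (∀ i, IsOpen (U i)) → (⋃ i, U i) = Set.univ →
    ∃ t : Set ι, #t ≤ lindelofDeg Z ∧ (⋃ i ∈ t, U i) = Set.univ :=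
  csInf_mem ⟨_, mem_lindelofSet⟩

lemma lindelofDeg_le_two_power {Z : Type u} [TopologicalSpace Z] :
    lindelofDeg Z ≤ 2 ^ #Z := csInf_le' mem_lindelofSet

lemma lindelofDeg_le {Z : Type u} [TopologicalSpace Z] {κ : Cardinal.{u}}
    (h : ∀ (ι : Type u) (U : ι → Set Z), (∀ i, IsOpen (U i)) → (⋃ i, U i) = Set.univ →
    ∃ t : Set ι, #t ≤ κ ∧ (⋃ i ∈ t, U i) = Set.univ) : lindelofDeg Z ≤ κ := csInf_le' h

lemma lindelofDeg_le_hLindelof {Z : Type u} [TopologicalSpace Z] (S : Set Z) :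
    lindelofDeg ↥S ≤ hLindelof Z := by
  refine le_ciSup (f := fun S : Set Z => lindelofDeg ↥S) ⟨(2 : Cardinal.{u}) ^ #Z, ?_⟩ S
  rintro _ ⟨S, rfl⟩
  refine le_trans lindelofDeg_le_two_power ?_
  exact Cardinal.power_le_power_left two_ne_zero (Cardinal.mk_set_le S)

instance {Z : Type u} [TopologicalSpace Z] :
    Nonempty {B : Set (Set Z) // TopologicalSpace.IsTopologicalBasis B} :=
  ⟨⟨_, TopologicalSpace.isTopologicalBasis_opens⟩⟩

lemma hLindelof_le_topWeight {Z : Type u} [TopologicalSpace Z] :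
    hLindelof Z ≤ topWeight Z := by
  refine le_ciInf fun B => ciSup_le' fun S => lindelofDeg_le ?_
  intro ι U hU hcov
  have hops : ∀ i, ∃ V : Set Z, IsOpen V ∧ Subtype.val ⁻¹' V = U i := fun i =>
    isOpen_induced_iff.mp (hU i)
  choose V hVo hVe using hops
  set G : Set ↥B.1 := {b | ∃ i, Subtype.val ⁻¹' (b : Set Z) ⊆ U i} with hG
  have hch : ∀ b : ↥G, ∃ i, Subtype.val ⁻¹' ((b : ↥B.1) : Set Z) ⊆ U i := fun b => b.2
  choose g hg using hch
  refine ⟨Set.range g, ?_, ?_⟩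
  · exact le_trans Cardinal.mk_range_le (Cardinal.mk_set_le G)
  · ext x
    simp only [Set.mem_iUnion, Set.mem_univ, iff_true]
    have : x ∈ ⋃ i, U i := hcov ▸ Set.mem_univ x
    obtain ⟨i, hi⟩ := Set.mem_iUnion.mp this
    have hxV : (x : Z) ∈ V i := by rw [← hVe i] at hi; exact hi
    obtain ⟨b, hb, hxb, hbV⟩ := B.2.exists_subset_of_mem_open hxV (hVo i)
    have hmem : (⟨b, hb⟩ : ↥B.1) ∈ G := ⟨i, by
      refine subset_trans (Set.preimage_mono hbV) ?_
      rw [hVe i]⟩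
    exact ⟨g ⟨⟨b, hb⟩, hmem⟩, ⟨_, rfl⟩, hg ⟨⟨b, hb⟩, hmem⟩ hxb⟩

lemma sep' {K : Type u} [TopologicalSpace K] [CompactSpace K] [T2Space K] (x y : K) :
    ∃ U V : Set K, IsOpen U ∧ IsOpen V ∧
      (x ≠ y → x ∈ U ∧ y ∈ V ∧ closure U ∩ closure V = ∅) := by
  by_cases h : x = y
  · exact ⟨∅, ∅, isOpen_empty, isOpen_empty, fun hne => absurd h hne⟩
  · obtain ⟨U', V', hU', hV', hxU', hyV', hdisj⟩ := t2_separation h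
    obtain ⟨C, hC, hCc, hCs⟩ := exists_mem_nhds_isClosed_subset (hU'.mem_nhds hxU')
    obtain ⟨D, hD, hDc, hDs⟩ := exists_mem_nhds_isClosed_subset (hV'.mem_nhds hyV')
    refine ⟨interior C, interior D, isOpen_interior, isOpen_interior, fun _ =>
      ⟨mem_interior_iff_mem_nhds.2 hC, mem_interior_iff_mem_nhds.2 hD, ?_⟩⟩
    have h1 : closure (interior C) ⊆ U' := (closure_minimal interior_subset hCc).trans hCs
    have h2 : closure (interior D) ⊆ V' := (closure_minimal interior_subset hDc).trans hDs
    exact Set.disjoint_iff_inter_eq_empty.mp (hdisj.mono h1 h2)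

lemma topWeight_le_mk_basis {Z : Type u} [TopologicalSpace Z] {B : Set (Set Z)}
    (hB : TopologicalSpace.IsTopologicalBasis B) : topWeight Z ≤ #↥B :=
  ciInf_le' (fun B : {B : Set (Set Z) // TopologicalSpace.IsTopologicalBasis B} => #↥B.1) ⟨B, hB⟩

lemma topWeight_le_hLindelof_sq (K : Type u) [TopologicalSpace K] [CompactSpace K]
    [T2Space K] [Infinite K] : topWeight K ≤ hLindelof (K × K) := by
  classical
  choose u v hu hv hsep using sep' (K := K)
  set W : Set (K × K) := {p | p.1 ≠ p.2} with hW
  -- the canonical open cover of the off-diagonal subspace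
  set C : ↥W → Set ↥W := fun p =>
    Subtype.val ⁻¹' ((u p.1.1 p.1.2) ×ˢ (v p.1.1 p.1.2)) with hC
  have hCopen : ∀ p, IsOpen (C p) := fun p =>
    ((hu _ _).prod (hv _ _)).preimage continuous_subtype_val
  have hCcov : (⋃ p, C p) = Set.univ := by
    ext q
    simp only [Set.mem_iUnion, Set.mem_univ, iff_true]
    obtain ⟨h1, h2, -⟩ := hsep q.1.1 q.1.2 q.2
    exact ⟨q, Set.mem_preimage.2 (Set.mk_mem_prod h1 h2)⟩
  obtain ⟨t, htle, htcov⟩ := lindelofDeg_spec _ C hCopen hCcov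
  -- the basis generated by finite intersections of the chosen rectangles' sides
  set σ := (↥t ⊕ ↥t) with hσ
  set h : σ → Set K := Sum.elim (fun p => u p.1.1.1 p.1.1.2) (fun p => v p.1.1.1 p.1.1.2)
    with hh
  have hhopen : ∀ i, IsOpen (h i) := by rintro (p | p) <;> simp [hh, hu, hv]
  set B : Set (Set K) := Set.range (fun s : Finset σ => ⋂ i ∈ s, h i) with hB
  -- key separation property coming from the subcover
  have key : ∀ x y : K, x ≠ y → ∃ p : ↥t,
      x ∈ u p.1.1.1 p.1.1.2 ∧ y ∈ v p.1.1.1 p.1.1.2 := by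
    intro x y hxy
    have hq : (⟨(x, y), hxy⟩ : ↥W) ∈ ⋃ p ∈ t, C p := htcov ▸ Set.mem_univ _
    obtain ⟨p, hp, hmem⟩ := Set.mem_iUnion₂.mp hq
    have := Set.mem_preimage.mp hmem
    exact ⟨⟨p, hp⟩, this.1, this.2⟩
  -- pairs in t have disjoint closures for their rectangles
  have hdisj : ∀ p : ↥t, closure (u p.1.1.1 p.1.1.2) ∩ closure (v p.1.1.1 p.1.1.2) = ∅ :=
    fun p => (hsep p.1.1.1 p.1.1.2 p.1.2).2.2
  have hBbasis : TopologicalSpace.IsTopologicalBasis B := by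
    refine TopologicalSpace.isTopologicalBasis_of_isOpen_of_nhds ?_ ?_
    · rintro _ ⟨s, rfl⟩
      exact isOpen_biInter_finset fun i _ => hhopen i
    · intro a O haO hO
      -- cover the compact complement of O
      set J : Set ↥t := {p | a ∈ u p.1.1.1 p.1.1.2} with hJ
      have hcov2 : Oᶜ ⊆ ⋃ p : ↥J, v p.1.1.1.1 p.1.1.1.2 := by
        intro y hy
        have hya : y ≠ a := fun hya => hy (hya ▸ haO)
        obtain ⟨p, hp1, hp2⟩ := key a y (Ne.symm hya)
        exact Set.mem_iUnion.2 ⟨⟨p, hp1⟩, hp2⟩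
      have hcpt : IsCompact Oᶜ := hO.isClosed_compl.isCompact
      obtain ⟨s, hs⟩ := hcpt.elim_finite_subcover _ (fun p : ↥J => hv _ _) hcov2
      refine ⟨⋂ p ∈ s, u p.1.1.1.1 p.1.1.1.2, ?_, ?_, ?_⟩
      · refine ⟨s.image fun p : ↥J => (Sum.inl p.1 : σ), ?_⟩
        show (⋂ i ∈ s.image fun p : ↥J => (Sum.inl p.1 : σ), h i) = _
        rw [Finset.set_biInter_finset_image]
        rfl
      · exact Set.mem_iInter₂.2 fun p _ => p.2
      · intro z hz
        by_contra hzO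
        obtain ⟨q, hq, hzq⟩ := Set.mem_iUnion₂.mp (hs hzO)
        have hzu : z ∈ u q.1.1.1.1 q.1.1.1.2 := Set.mem_iInter₂.mp hz q hq
        have : z ∈ closure (u q.1.1.1.1 q.1.1.1.2) ∩ closure (v q.1.1.1.1 q.1.1.1.2) :=
          ⟨subset_closure hzu, subset_closure hzq⟩
        rw [hdisj q.1] at this
        exact this
  -- now estimate cardinalities
  by_cases hfin : Finite ↥t
  · -- finite case: the space would be finite, contradiction
    exfalso
    have : Finite σ := by rw [hσ]; infer_instance
    have hFS : Finite (Finset σ) := by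
      have := Fintype.ofFinite σ
      infer_instance
    have hBfin : Finite ↥B := (Set.finite_range _).to_subtype
    have := basis_finite_of hBbasis hBfin
    exact not_finite K
  · have hinf : Infinite ↥t := not_finite_iff_infinite.mp hfin
    have hσinf : Infinite σ := by rw [hσ]; infer_instance
    have h1 : #↥B ≤ #(Finset σ) := Cardinal.mk_range_le
    have h2 : #(Finset σ) = #σ := Cardinal.mk_finset_of_infinite σ
    have h3 : #σ = #↥t + #↥t := by rw [hσ]; simp
    have h4 : #↥t + #↥t = #↥t := Cardinal.add_eq_self (Cardinal.infinite_iff.mp hinf)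
    calc topWeight K ≤ #↥B := topWeight_le_mk_basis hBbasis
      _ ≤ #↥t := by rw [h2, h3, h4] at h1; exact h1
      _ ≤ lindelofDeg ↥W := htle
      _ ≤ hLindelof (K × K) := lindelofDeg_le_hLindelof W

lemma topWeight_sq_le (K : Type u) [TopologicalSpace K] [T2Space K] [Infinite K] :
    topWeight (K × K) ≤ topWeight K := by
  refine le_ciInf fun B => ?_
  have hBK : ℵ₀ ≤ #↥B.1 := basis_infinite B.2
  refine le_trans (topWeight_le_mk_basis (B.2.prod B.2)) ?_
  refine le_trans Cardinal.mk_image2_le ?_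
  rw [Cardinal.mul_eq_self hBK]

/-- For an infinite compact Hausdorff space `K`, `hL(K²) = w(K)`; in
particular, if `K` is not metrizable then `hL(K²)` is uncountable. -/
theorem stmt11 (K : Type u) [TopologicalSpace K] [CompactSpace K] [T2Space K] [Infinite K] :
    hLindelof (K × K) = topWeight K ∧
      (¬ TopologicalSpace.MetrizableSpace K → ℵ₀ < hLindelof (K × K)) := by
  have heq : hLindelof (K × K) = topWeight K :=
    le_antisymm (le_trans hLindelof_le_topWeight (topWeight_sq_le K))
      (topWeight_le_hLindelof_sq K)
  refine ⟨heq, fun hm => ?_⟩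
  by_contra hlt
  push_neg at hlt
  rw [heq] at hlt
  -- topWeight K ≤ ℵ₀ gives a countable basis
  obtain ⟨B, hBw⟩ : ∃ B : {B : Set (Set K) // TopologicalSpace.IsTopologicalBasis B},
      #B.1 = topWeight K := by
    have := csInf_mem (Set.range_nonempty
      (fun B : {B : Set (Set K) // TopologicalSpace.IsTopologicalBasis B} => #B.1))
    obtain ⟨B, hB⟩ := this
    exact ⟨B, hB⟩
  have hcnt : Countable ↥B.1 := Cardinal.mk_le_aleph0_iff.mp (hBw ▸ hlt)
  have : SecondCountableTopology K :=
    B.2.secondCountableTopology (Set.countable_coe_iff.mp hcnt)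
  exact hm inferInstance

end
end

section
/- Let X be a real Banach space, endow X with its weak topology and X* with the weak* topology, and let κ be an infinite cardinal. Then hL(X^n) ≤ κ for every n ∈ ℕ if and only if hd((X*)^n) ≤ κ for every n ∈ ℕ, where finite powers carry product topologies. -/
open Cardinal Set Topology

universe u

noncomputable section

/-!
A space has `κ < hL` iff it contains a right-separated family of size `κ⁺`, and `κ < hd` iff it
contains a left-separated one; a left-separated family is right-separated for the reversed order.
In a finite power of a weak topology `σ(E, F)` the separating neighbourhoods can be taken basic,
cut out by finitely many `f ∈ F` with a common radius, and after pigeonholing, `κ⁺` many of them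
share the number of functionals and the radius. The family is then a separated system for the
pairing `B`, and such a system yields a left-separated family of size `κ⁺` in a finite power of
`σ(F, E)`: recording the numbers `B (x a i) (f a j)` as extra coordinates turns the roles of
points and functionals around. Applied to `σ(X, X*)`, and for the reversed order to `σ(X*, X)`,
this gives both implications.
-/

abbrev SuccType (κ : Cardinal.{u}) : Type u := (Order.succ κ).ord.ToType

section SuccType

variable {κ : Cardinal.{u}}

theorem mk_Iic_succType_le (hκ : ℵ₀ ≤ κ) (a : SuccType κ) : #(Iic a) ≤ κ := by
  have hIio : #(Iio a) < Order.succ κ := by simpa using mk_Iio_lt a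
  calc #(Iic a) = #(insert a (Iio a) : Set (SuccType κ)) := by rw [Iio_insert]
    _ ≤ #(Iio a) + 1 := mk_insert_le
    _ ≤ κ + 1 := add_le_add_left (Order.lt_succ_iff.1 hIio) 1
    _ = κ := add_one_eq hκ

theorem exists_mem_forall_lt_of_mk_le (hκ : ℵ₀ ≤ κ) {A s : Set (SuccType κ)} (hA : κ < #A)
    (hs : #s ≤ κ) : ∃ a ∈ A, ∀ b ∈ s, b < a := by
  have hsmall : #(⋃ b ∈ s, Iic b) ≤ κ :=
    calc #(⋃ b ∈ s, Iic b) ≤ #s * ⨆ b : s, #(Iic b.1) := mk_biUnion_le _ _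
      _ ≤ κ * κ := mul_le_mul' hs (ciSup_le' fun b => mk_Iic_succType_le hκ b.1)
      _ = κ := mul_eq_self hκ
  obtain ⟨a, haA, ha⟩ :=
    not_subset.1 fun hsub => ((mk_le_mk_of_subset hsub).trans hsmall).not_gt hA
  exact ⟨a, haA, fun b hb => not_le.1 fun hab => ha (mem_biUnion hb hab)⟩

theorem exists_seq_forall_image_Iio {Y : Type u} (R : Set Y → Y → Prop)
    (hR : ∀ s : Set Y, #s ≤ κ → ∃ y, R s y) : ∃ F : SuccType κ → Y, ∀ α, R (F '' Iio α) (F α) := by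
  have hchoice : ∀ s : Set Y, ∃ y, #s ≤ κ → R s y := fun s => by
    by_cases hs : #s ≤ κ
    · exact (hR s hs).imp fun _ hy _ => hy
    · exact (hR ∅ (by simp)).imp fun _ _ h => absurd h hs
  choose c hc using hchoice
  let F : SuccType κ → Y := WellFoundedLT.fix fun α ih => c (range fun β : Iio α => ih β β.2)
  have hF : ∀ α, F α = c (F '' Iio α) := fun α => by
    change WellFoundedLT.fix _ α = _
    rw [WellFoundedLT.fix_eq, ← image_eq_range]
  refine ⟨F, fun α => hF α ▸ hc _ ?_⟩
  have hIio : #(Iio α) < Order.succ κ := by simpa using mk_Iio_lt α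
  exact mk_image_le.trans (Order.lt_succ_iff.1 hIio)

end SuccType

theorem exists_lt_mk_inter_preimage_singleton {ι : Type u} {κ : Cardinal.{u}} (hκ : ℵ₀ ≤ κ)
    {A : Set ι} (hA : κ < #A) (h : ι → ℕ) : ∃ N, κ < #(A ∩ h ⁻¹' {N} : Set ι) := by
  by_contra! hsmall
  refine hA.not_ge ?_
  have hcover : (A : Set ι) = ⋃ N, A ∩ h ⁻¹' {N} := by
    rw [← inter_iUnion, ← preimage_iUnion, iUnion_of_singleton, preimage_univ, inter_univ]
  have hunion := mk_iUnion_le_lift (fun N : ℕ => A ∩ h ⁻¹' {N})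
  simp only [lift_uzero, mk_nat, lift_aleph0] at hunion
  calc #A = #(⋃ N, A ∩ h ⁻¹' {N} : Set ι) := by rw [← hcover]
    _ ≤ ℵ₀ * ⨆ N, #(A ∩ h ⁻¹' {N} : Set ι) := hunion
    _ ≤ ℵ₀ * κ := mul_le_mul_right (ciSup_le' hsmall) _
    _ = κ := aleph0_mul_eq hκ

section CardinalFunctions

variable {Z : Type u} [TopologicalSpace Z] {κ : Cardinal.{u}}

theorem lindelofDeg_le_iff : lindelofDeg Z ≤ κ ↔ ∀ (ι : Type u) (U : ι → Set Z),
    (∀ i, IsOpen (U i)) → ⋃ i, U i = Set.univ → ∃ t : Set ι, #t ≤ κ ∧ ⋃ i ∈ t, U i = Set.univ := by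
  refine ⟨fun h ι U hU hcov => ?_, fun h => csInf_le' h⟩
  have hne : {κ : Cardinal.{u} | ∀ (ι : Type u) (U : ι → Set Z), (∀ i, IsOpen (U i)) →
      ⋃ i, U i = Set.univ → ∃ t : Set ι, #t ≤ κ ∧ ⋃ i ∈ t, U i = Set.univ}.Nonempty := by
    refine ⟨#Z, fun ι U _ hcov => ?_⟩
    choose g hg using fun z : Z => mem_iUnion.1 (hcov ▸ Set.mem_univ z)
    exact ⟨range g, mk_range_le, eq_univ_of_forall fun z => mem_biUnion (mem_range_self z) (hg z)⟩
  obtain ⟨t, ht, htU⟩ := csInf_mem hne ι U hU hcov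
  exact ⟨t, ht.trans h, htU⟩

theorem densityCard_le_iff : densityCard Z ≤ κ ↔ ∃ D : Set Z, Dense D ∧ #D ≤ κ := by
  refine ⟨fun h => ?_, fun ⟨D, hD, hDκ⟩ => (ciInf_le' _ ⟨D, hD⟩).trans hDκ⟩
  have : Nonempty {D : Set Z // Dense D} := ⟨⟨Set.univ, dense_univ⟩⟩
  obtain ⟨⟨D, hD⟩, hDeq⟩ := ciInf_mem fun D : {D : Set Z // Dense D} => #D.1
  exact ⟨D, hD, hDeq.trans_le h⟩

theorem lt_hLindelof_iff : κ < hLindelof Z ↔ ∃ S : Set Z, κ < lindelofDeg S := by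
  simp only [hLindelof, lt_ciSup_iff bddAbove_of_small]

theorem lt_hdens_iff : κ < hdens Z ↔ ∃ S : Set Z, κ < densityCard S := by
  simp only [hdens, lt_ciSup_iff bddAbove_of_small]

end CardinalFunctions

section Separated

variable {ι Z : Type*} [TopologicalSpace Z]

def RightSeparates [LT ι] (U : ι → Set Z) (z : ι → Z) (A : Set ι) : Prop :=
  (∀ a ∈ A, IsOpen (U a) ∧ z a ∈ U a) ∧ ∀ a ∈ A, ∀ b ∈ A, a < b → z b ∉ U a

def LeftSeparates [LT ι] (U : ι → Set Z) (z : ι → Z) (A : Set ι) : Prop :=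
  (∀ a ∈ A, IsOpen (U a) ∧ z a ∈ U a) ∧ ∀ a ∈ A, ∀ b ∈ A, a < b → z a ∉ U b

variable [LT ι] {U : ι → Set Z} {z : ι → Z} {A : Set ι}

theorem rightSeparates_toDual_iff : RightSeparates (ι := ιᵒᵈ) U z A ↔ LeftSeparates U z A :=
  and_congr Iff.rfl ⟨fun h a ha b hb hab => h b hb a ha hab, fun h a ha b hb hab => h b hb a ha hab⟩

theorem leftSeparates_toDual_iff : LeftSeparates (ι := ιᵒᵈ) U z A ↔ RightSeparates U z A :=
  and_congr Iff.rfl ⟨fun h a ha b hb hab => h b hb a ha hab, fun h a ha b hb hab => h b hb a ha hab⟩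

end Separated

section SeparatedSuccType

variable {Z : Type u} [TopologicalSpace Z] {κ : Cardinal.{u}}

theorem exists_rightSeparates_of_lt_hLindelof (h : κ < hLindelof Z) :
    ∃ (z : SuccType κ → Z) (U : SuccType κ → Set Z), RightSeparates U z Set.univ := by
  obtain ⟨S, hS⟩ := lt_hLindelof_iff.1 h
  obtain ⟨ι, U, hU, hcov, hbad⟩ : ∃ (ι : Type u) (U : ι → Set S), (∀ i, IsOpen (U i)) ∧
      ⋃ i, U i = Set.univ ∧ ∀ t : Set ι, #t ≤ κ → ⋃ i ∈ t, U i ≠ Set.univ := by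
    simpa [lindelofDeg_le_iff] using hS.not_ge
  choose W hW hWU using fun i => isOpen_induced_iff.1 (hU i)
  have hR : ∀ s : Set (S × ι), #s ≤ κ → ∃ p : S × ι, p.1 ∈ U p.2 ∧ ∀ q ∈ s, p.1 ∉ U q.2 := by
    intro s hs
    obtain ⟨y, hy⟩ := (ne_univ_iff_exists_notMem _).1 (hbad _ (mk_image_le.trans hs))
    obtain ⟨i, hi⟩ := mem_iUnion.1 (hcov ▸ Set.mem_univ y)
    exact ⟨(y, i), hi, fun q hq hyq => hy (mem_biUnion (mem_image_of_mem Prod.snd hq) hyq)⟩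
  obtain ⟨F, hF⟩ := exists_seq_forall_image_Iio _ hR
  refine ⟨fun α => (F α).1, fun α => W (F α).2, fun α _ => ⟨hW _, ?_⟩, fun α _ β _ hαβ => ?_⟩
  · exact (hWU (F α).2).superset (hF α).1
  · exact fun hβ => (hF β).2 (F α) (mem_image_of_mem F hαβ) ((hWU (F α).2).subset hβ)

theorem exists_leftSeparates_of_lt_hdens (h : κ < hdens Z) :
    ∃ (z : SuccType κ → Z) (U : SuccType κ → Set Z), LeftSeparates U z Set.univ := by
  obtain ⟨S, hS⟩ := lt_hdens_iff.1 h
  have hR : ∀ s : Set S, #s ≤ κ → ∃ y, y ∉ closure s := fun s hs => by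
    by_contra! hdense
    exact hS.not_ge (densityCard_le_iff.2 ⟨s, fun y => hdense y, hs⟩)
  obtain ⟨F, hF⟩ := exists_seq_forall_image_Iio _ hR
  choose W hW hWF using fun α =>
    isOpen_induced_iff.1 (isClosed_closure (s := F '' Iio α)).isOpen_compl
  exact ⟨fun α => F α, W, fun α _ => ⟨hW α, (hWF α).superset (hF α)⟩,
    fun α _ β _ hαβ hα => (hWF β).subset hα (subset_closure (mem_image_of_mem F hαβ))⟩

variable (hκ : ℵ₀ ≤ κ) {A : Set (SuccType κ)} (hA : κ < #A) {U : SuccType κ → Set Z}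
  {z : SuccType κ → Z}
include hκ hA

theorem lt_hLindelof_of_rightSeparates (h : RightSeparates U z A) : κ < hLindelof Z := by
  refine lt_hLindelof_iff.2 ⟨z '' A, not_le.1 fun hle => ?_⟩
  have hcov : ⋃ a : A, ((↑) ⁻¹' U a : Set (z '' A)) = Set.univ :=
    eq_univ_of_forall fun ⟨_, a, ha, hz⟩ => mem_iUnion.2 ⟨⟨a, ha⟩, hz ▸ (h.1 a ha).2⟩
  obtain ⟨t, ht, htcov⟩ := lindelofDeg_le_iff.1 hle A _
    (fun a => (h.1 a a.2).1.preimage continuous_subtype_val) hcov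
  obtain ⟨a, ha, hlt⟩ := exists_mem_forall_lt_of_mk_le hκ hA (mk_image_le.trans ht)
  obtain ⟨b, hb, hzb⟩ := mem_iUnion₂.1 (htcov ▸ Set.mem_univ (⟨z a, a, ha, rfl⟩ : z '' A))
  exact h.2 b b.2 a ha (hlt b (mem_image_of_mem _ hb)) hzb

theorem lt_hdens_of_leftSeparates (h : LeftSeparates U z A) : κ < hdens Z := by
  refine lt_hdens_iff.2 ⟨z '' A, not_le.1 fun hle => ?_⟩
  obtain ⟨D, hD, hDκ⟩ := densityCard_le_iff.1 hle
  choose σ hσA hσ using fun d : D => d.1.2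
  obtain ⟨a, ha, hlt⟩ := exists_mem_forall_lt_of_mk_le hκ hA (mk_range_le.trans hDκ)
  obtain ⟨d, hdD, hdU⟩ := hD.exists_mem_open ((h.1 a ha).1.preimage continuous_subtype_val)
    ⟨⟨z a, a, ha, rfl⟩, (h.1 a ha).2⟩
  exact h.2 _ (hσA ⟨d, hdD⟩) a ha (hlt _ (mem_range_self _)) ((hσ ⟨d, hdD⟩).symm ▸ hdU)

end SeparatedSuccType

section Pairing

variable {𝕜 E F : Type*} [NormedField 𝕜] [AddCommGroup E] [Module 𝕜 E] [AddCommGroup F]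
  [Module 𝕜 F] {B : E →ₗ[𝕜] F →ₗ[𝕜] 𝕜}

theorem WeakBilin.exists_finset_of_mem_nhds_pi {σ : Type*} {z : σ → WeakBilin B}
    {U : Set (σ → WeakBilin B)} (hU : U ∈ 𝓝 z) :
    ∃ T : Finset F, ∃ r > 0, {w | ∀ i, ∀ f ∈ T, ‖B (w i) f - B (z i) f‖ < r} ⊆ U := by
  classical
  obtain ⟨s, r, hr, hs⟩ :=
    ((withSeminorms_pi fun _ => B.weakBilin_withSeminorms).mem_nhds_iff z U).1 hU
  refine ⟨s.image Sigma.snd, r, hr, fun w hw => hs ?_⟩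
  rw [Seminorm.mem_ball]
  refine Seminorm.finset_sup_apply_lt hr fun ⟨i, f⟩ hp => ?_
  change ‖B ((w - z) i) f‖ < r
  rw [Pi.sub_apply, show B (w i - z i) = B (w i) - B (z i) from map_sub B (w i) (z i)]
  exact hw i f (Finset.mem_image_of_mem _ hp)

theorem exists_uniform_enum_of_lt_mk {ι : Type u} {F : Type*} [Zero F] {κ : Cardinal.{u}}
    (hκ : ℵ₀ ≤ κ) {A : Set ι} (hA : κ < #A) (T : ι → Finset F) {r : ι → ℝ}
    (hr : ∀ a ∈ A, 0 < r a) :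
    ∃ A' ⊆ A, κ < #A' ∧ ∃ (N : ℕ) (f : ι → Fin N → F) (ε : ℝ), 0 < ε ∧
      ∀ a ∈ A', ε ≤ r a ∧ ∀ g ∈ T a, ∃ j, f a j = g := by
  choose! m hm using fun a (ha : a ∈ A) => exists_nat_one_div_lt (hr a ha)
  obtain ⟨N, hN⟩ := exists_lt_mk_inter_preimage_singleton hκ hA fun a => (T a).card + m a
  refine ⟨_, inter_subset_left, hN, N, fun a j => (T a).toList.getD j 0, 1 / (N + 1),
    by positivity, fun a ⟨haA, haN⟩ => ?_⟩
  change (T a).card + m a = N at haN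
  refine ⟨?_, fun g hg => ?_⟩
  · have hmN : (m a : ℝ) ≤ N := by exact_mod_cast (Nat.le_add_left _ _).trans haN.le
    calc 1 / ((N : ℝ) + 1) ≤ 1 / ((m a : ℝ) + 1) := by gcongr
      _ ≤ r a := (hm a haA).le
  · obtain ⟨j, hj, rfl⟩ := List.mem_iff_getElem.1 (Finset.mem_toList.2 hg)
    have hjN : j < N := by
      rw [Finset.length_toList] at hj
      omega
    exact ⟨⟨j, hjN⟩, List.getD_eq_getElem _ _ hj⟩

variable {ι σ τ : Type*}

def SeparatedSystem [LT ι] (B : E →ₗ[𝕜] F →ₗ[𝕜] 𝕜) (A : Set ι) (x : ι → σ → E)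
    (f : ι → τ → F) (ε : ℝ) : Prop :=
  ∀ a ∈ A, ∀ b ∈ A, a < b → ∃ i j, ε ≤ ‖B (x b i - x a i) (f a j)‖

theorem RightSeparates.exists_separatedSystem {ι : Type u} [LT ι] {κ : Cardinal.{u}}
    {A : Set ι} {U : ι → Set (σ → WeakBilin B)} {z : ι → σ → WeakBilin B}
    (h : RightSeparates U z A) (hκ : ℵ₀ ≤ κ) (hA : κ < #A) :
    ∃ A' ⊆ A, κ < #A' ∧ ∃ (N : ℕ) (f : ι → Fin N → F) (ε : ℝ), 0 < ε ∧
      SeparatedSystem B A' z f ε := by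
  choose! T r hr hTU using fun a (ha : a ∈ A) =>
    WeakBilin.exists_finset_of_mem_nhds_pi ((h.1 a ha).1.mem_nhds (h.1 a ha).2)
  obtain ⟨A', hA'A, hA', N, f, ε, hε, hf⟩ := exists_uniform_enum_of_lt_mk hκ hA T hr
  refine ⟨A', hA'A, hA', N, f, ε, hε, fun a ha b hb hab => ?_⟩
  have hbasic : z b ∉ {w | ∀ i, ∀ g ∈ T a, ‖B (w i) g - B (z a i) g‖ < r a} :=
    fun hw => h.2 a (hA'A ha) b (hA'A hb) hab (hTU a (hA'A ha) hw)
  simp only [mem_ofPred_eq, not_forall, not_lt] at hbasic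
  obtain ⟨i, g, hg, hgr⟩ := hbasic
  obtain ⟨j, rfl⟩ := (hf a ha).2 g hg
  refine ⟨i, j, (hf a ha).1.trans (hgr.trans_eq ?_)⟩
  exact congrArg (‖· (f a j)‖) (map_sub B (z b i) (z a i)).symm

section LinearOrder

variable [LinearOrder ι] {A : Set ι} {x : ι → σ → E} {f : ι → τ → F} {ε : ℝ}

theorem SeparatedSystem.exists_apply_eq_one (h : SeparatedSystem B A x f ε) (hε : 0 < ε)
    (hA : A.Nontrivial) : ∃ v g, B v g = 1 := by
  obtain ⟨a, ha, b, hb, hab⟩ := hA.exists_lt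
  obtain ⟨i, j, hij⟩ := h a ha b hb hab
  have hne : B (x b i - x a i) (f a j) ≠ 0 := fun h0 => by
    rw [h0, norm_zero] at hij
    linarith
  exact ⟨(B (x b i - x a i) (f a j))⁻¹ • (x b i - x a i), f a j, by
    rw [map_smul, LinearMap.smul_apply, smul_eq_mul, inv_mul_cancel₀ hne]⟩

theorem SeparatedSystem.exists_leftSeparates_flip [Fintype σ] [Fintype τ]
    (h : SeparatedSystem B A x f ε) (hε : 0 < ε) {v : E} {g : F} (hvg : B v g = 1) :
    ∃ (m : ℕ) (G : ι → Fin m → WeakBilin B.flip) (V : ι → Set (Fin m → WeakBilin B.flip)),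
      LeftSeparates V G A := by
  -- the point for `a` has `f a j` at `inl j` and stores the number `B (x a i) (f a j)` at
  -- `inr (i, j)` as a multiple of `g`, where `v` reads it off
  let e := Fintype.equivFin (τ ⊕ σ × τ)
  have hev : ∀ (y : E) (s : Fin (Fintype.card (τ ⊕ σ × τ))),
      Continuous fun H : Fin _ → WeakBilin B.flip => B y (H s) :=
    fun y s => (WeakBilin.eval_continuous B.flip y).comp (continuous_apply s)
  refine ⟨_, fun a s => (Sum.elim (f a) (fun p => B (x a p.1) (f a p.2) • g) (e.symm s) : F),
    fun a => {H | ∀ i j, ‖B (x a i) (H (e (.inl j))) - B v (H (e (.inr (i, j))))‖ < ε / 2},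
    fun a _ => ⟨?_, fun i j => ?_⟩, fun a ha b hb hab hmem => ?_⟩
  · simp only [ofPred_forall]
    exact isOpen_iInter_of_finite fun i => isOpen_iInter_of_finite fun j =>
      isOpen_lt ((hev _ _).sub (hev _ _)).norm continuous_const
  · simp [hvg, hε]
  · obtain ⟨i, j, hij⟩ := h a ha b hb hab
    have hij' := hmem i j
    simp only [Equiv.symm_apply_apply, Sum.elim_inl, Sum.elim_inr, map_smul, smul_eq_mul,
      hvg, mul_one] at hij'
    rw [map_sub, LinearMap.sub_apply] at hij
    linarith

end LinearOrder

theorem RightSeparates.exists_leftSeparates_flip {ι : Type u} [LinearOrder ι] [Fintype σ]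
    {κ : Cardinal.{u}} {A : Set ι} {U : ι → Set (σ → WeakBilin B)} {z : ι → σ → WeakBilin B}
    (h : RightSeparates U z A) (hκ : ℵ₀ ≤ κ) (hA : κ < #A) :
    ∃ A' ⊆ A, κ < #A' ∧ ∃ (m : ℕ) (G : ι → Fin m → WeakBilin B.flip)
      (V : ι → Set (Fin m → WeakBilin B.flip)), LeftSeparates V G A' := by
  obtain ⟨A', hA'A, hA', N, f, ε, hε, hsys⟩ := h.exists_separatedSystem hκ hA
  have hnt : A'.Nontrivial :=
    nontrivial_coe_sort.1 (one_lt_iff_nontrivial.1 ((one_lt_aleph0.trans_le hκ).trans hA'))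
  obtain ⟨v, g, hvg⟩ := hsys.exists_apply_eq_one hε hnt
  exact ⟨A', hA'A, hA', hsys.exists_leftSeparates_flip hε hvg⟩

end Pairing

theorem stmt12_general (X : Type u) [NormedAddCommGroup X] [NormedSpace ℝ X]
    (κ : Cardinal.{u}) (hκ : ℵ₀ ≤ κ) :
    (∀ n : ℕ, hLindelof (Fin n → WeakSpace ℝ X) ≤ κ) ↔
      (∀ n : ℕ, hdens (Fin n → WeakDual ℝ X) ≤ κ) := by
  have hκ_lt : κ < #(Set.univ : Set (SuccType κ)) := by simp
  constructor
  · intro hL n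
    by_contra! hd
    obtain ⟨z, U, hzU⟩ := exists_leftSeparates_of_lt_hdens hd
    obtain ⟨A, -, hA, m, G, V, hGV⟩ :=
      ((rightSeparates_toDual_iff (ι := SuccType κ)).2 hzU).exists_leftSeparates_flip hκ hκ_lt
    exact (hL m).not_gt <|
      lt_hLindelof_of_rightSeparates hκ hA ((leftSeparates_toDual_iff (ι := SuccType κ)).1 hGV)
  · intro hd n
    by_contra! hL
    obtain ⟨z, U, hzU⟩ := exists_rightSeparates_of_lt_hLindelof hL
    obtain ⟨A, -, hA, m, G, V, hGV⟩ := hzU.exists_leftSeparates_flip hκ hκ_lt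
    exact (hd m).not_gt (lt_hdens_of_leftSeparates hκ hA hGV)

/-- For a real Banach space `X` (with `X` carrying the weak topology and `X*`
the weak* topology) and an infinite cardinal `κ`: `hL(Xⁿ) ≤ κ` for every `n` iff
`hd((X*)ⁿ) ≤ κ` for every `n`. -/
theorem stmt12 (X : Type u) [NormedAddCommGroup X] [NormedSpace ℝ X] [CompleteSpace X]
    (κ : Cardinal.{u}) (hκ : ℵ₀ ≤ κ) :
    (∀ n : ℕ, hLindelof (Fin n → WeakSpace ℝ X) ≤ κ) ↔
      (∀ n : ℕ, hdens (Fin n → WeakDual ℝ X) ≤ κ) :=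
  stmt12_general X κ hκ

end
end

section
/- Let A be a Boolean algebra with Stone space K_A, and let K be any compact Hausdorff space. Then irr(A) ≤ irr_{BaA}(C(K_A)) ≤ irr_{BaS}(C(K_A)), and irr_{BaA}(C(K)) ≤ irr_{BaS}(C(K)). -/
open Cardinal Set Topology

universe u

noncomputable section

/-- Irredundance with respect to closed linear subspaces: the supremum of cardinalities of
sets `F` such that no `x ∈ F` lies in the closed linear span of `F \\ {x}`. -/
def irrBaS (X : Type u) [AddCommGroup X] [Module ℝ X] [TopologicalSpace X] : Cardinal.{u} :=
  sSup {c | ∃ F : Set X,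
    (∀ x ∈ F, x ∉ closure ((Submodule.span ℝ (F \ {x}) : Submodule ℝ X) : Set X)) ∧ c = #F}

/-- Irredundance of `C(K, ℝ)` with respect to closed subalgebras (containing the constants):
the supremum of cardinalities of sets `F` such that no `f ∈ F` lies in the closed subalgebra
generated by `F \\ {f}`. -/
def irrBaA (K : Type u) [TopologicalSpace K] : Cardinal.{u} :=
  sSup {c | ∃ F : Set C(K, ℝ),
    (∀ f ∈ F, f ∉ closure
      ((Algebra.adjoin ℝ (F \ {f}) : Subalgebra ℝ C(K, ℝ)) : Set C(K, ℝ))) ∧ c = #F}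

/-- The underlying set of the Boolean subalgebra generated by a subset of a Boolean algebra. -/
def boolGen {A : Type u} [BooleanAlgebra A] (s : Set A) : Set A :=
  ⋂₀ {t : Set A | s ⊆ t ∧ (⊥ : A) ∈ t ∧ (⊤ : A) ∈ t ∧ (∀ x ∈ t, xᶜ ∈ t) ∧
      (∀ x ∈ t, ∀ y ∈ t, x ⊔ y ∈ t) ∧ (∀ x ∈ t, ∀ y ∈ t, x ⊓ y ∈ t)}

/-- The irredundance of a Boolean algebra: the supremum of cardinalities of sets `R` such
that no `r ∈ R` belongs to the subalgebra generated by `R \\ {r}`. -/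
def irrBool (A : Type u) [BooleanAlgebra A] : Cardinal.{u} :=
  sSup {c | ∃ R : Set A, (∀ r ∈ R, r ∉ boolGen (R \ {r})) ∧ c = #R}

/-- The Stone space of a Boolean algebra `A`: the space of Boolean homomorphisms `A → Bool`
(equivalently, ultrafilters on `A`) with the topology of pointwise convergence, whose
basic (cl)open sets are `[a] = {u | u a = true}`. -/
abbrev StoneSpace (A : Type u) [BooleanAlgebra A] : Type u :=
  {g : A → Bool // g ⊤ = ⊤ ∧ g ⊥ = ⊥ ∧ (∀ a b, g (a ⊔ b) = g a ⊔ g b) ∧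
    (∀ a b, g (a ⊓ b) = g a ⊓ g b)}

instance StoneSpace.compactSpace (A : Type u) [BooleanAlgebra A] :
    CompactSpace (StoneSpace A) := by
  have h2 : ∀ (op : Bool → Bool → Bool) (op' : A → A → A),
      IsClosed {g : A → Bool | ∀ a b, g (op' a b) = op (g a) (g b)} := by
    intro op op'
    have : {g : A → Bool | ∀ a b, g (op' a b) = op (g a) (g b)}
        = ⋂ (a : A), ⋂ (b : A), {g | g (op' a b) = op (g a) (g b)} := by
      ext g; simp [Set.mem_iInter]
    rw [this]
    exact isClosed_iInter fun a => isClosed_iInter fun b =>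
      isClosed_eq (continuous_apply _)
        (show Continuous ((fun p : Bool × Bool => op p.1 p.2) ∘ fun g : A → Bool => (g a, g b))
          from continuous_of_discreteTopology.comp
            ((continuous_apply a).prodMk (continuous_apply b)))
  have h : IsClosed {g : A → Bool | g ⊤ = ⊤ ∧ g ⊥ = ⊥ ∧ (∀ a b, g (a ⊔ b) = g a ⊔ g b) ∧
      (∀ a b, g (a ⊓ b) = g a ⊓ g b)} := by
    apply IsClosed.inter (isClosed_eq (continuous_apply _) continuous_const)
    apply IsClosed.inter (isClosed_eq (continuous_apply _) continuous_const)
    exact (h2 (· ⊔ ·) (· ⊔ ·)).inter (h2 (· ⊓ ·) (· ⊓ ·))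
  exact isCompact_iff_compactSpace.mp h.isCompact

/-!
For an irredundant `R ⊆ A` and `r ∈ R`, the element `r` lies outside the Boolean subalgebra
`B` generated by `R \ {r}`. The prime ideal theorem then gives two ultrafilters that agree on
`B` but not on `r`: first a prime ideal containing every `b ∈ B` below `r` or below `rᶜ`, then
two prime ideals with the same trace on `B`, one missing `r` and one missing `rᶜ`. The functions
taking equal values at these two points form a closed subalgebra of `C(K_A)` containing the
indicators of `[s]`, `s ∈ R \ {r}`, but not that of `[r]`; so these indicators form an
irredundant family. The second inequality holds for every space, since the closed linear span
of a set lies in the closed subalgebra it generates.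
-/

lemma SupClosed.isIdeal_lowerClosure {α : Type*} [SemilatticeSup α] {s : Set α}
    (hs : SupClosed s) (hne : s.Nonempty) : Order.IsIdeal (lowerClosure s : Set α) where
  IsLowerSet := (lowerClosure s).lower
  Nonempty := hne.mono subset_lowerClosure
  Directed := by
    rintro x ⟨a, ha, hxa⟩ y ⟨b, hb, hyb⟩
    exact ⟨a ⊔ b, ⟨a ⊔ b, hs ha hb, le_rfl⟩, hxa.trans le_sup_left, hyb.trans le_sup_right⟩

lemma InfClosed.isPFilter_upperClosure {α : Type*} [SemilatticeInf α] {s : Set α}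
    (hs : InfClosed s) (hne : s.Nonempty) : Order.IsPFilter (upperClosure s : Set α) :=
  .of_def (hne.mono subset_upperClosure)
    (by
      rintro x ⟨a, ha, hax⟩ y ⟨b, hb, hby⟩
      exact ⟨a ⊓ b, ⟨a ⊓ b, hs ha hb, le_rfl⟩, inf_le_left.trans hax, inf_le_right.trans hby⟩)
    (fun hxy hx => (upperClosure s).upper hxy hx)

namespace Order.Ideal

variable {A : Type*} [BooleanAlgebra A]

lemma IsPrime.inf_mem_iff {J : Ideal A} (hJ : J.IsPrime) {a b : A} :
    a ⊓ b ∈ J ↔ a ∈ J ∨ b ∈ J :=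
  ⟨hJ.mem_or_mem, fun h => h.elim (J.lower inf_le_left) (J.lower inf_le_right)⟩

lemma IsPrime.exists_isPrime_trace_eq_notMem {P : Ideal A} (hP : P.IsPrime)
    (B : BooleanSubalgebra A) {c : A} (hc : ∀ b ∈ B, b ⊓ c = ⊥ → b ∈ P) :
    ∃ J : Ideal A, J.IsPrime ∧ (∀ b ∈ B, b ∈ J ↔ b ∈ P) ∧ c ∉ J := by
  have hI : Order.IsIdeal (lowerClosure ((B : Set A) ∩ P) : Set A) :=
    (B.supClosed.inter fun _ ha _ hb => P.sup_mem ha hb).isIdeal_lowerClosure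
      ⟨⊥, B.bot_mem, P.bot_mem⟩
  have hF : Order.IsPFilter (upperClosure ((· ⊓ c) '' ((B : Set A) \ P)) : Set A) := by
    refine InfClosed.isPFilter_upperClosure ?_ ⟨_, ⊤, ⟨B.top_mem, hP.top_notMem⟩, rfl⟩
    rintro _ ⟨a, ⟨haB, haP⟩, rfl⟩ _ ⟨b, ⟨hbB, hbP⟩, rfl⟩
    exact ⟨a ⊓ b, ⟨B.inf_mem haB hbB, fun h => (hP.inf_mem_iff.mp h).elim haP hbP⟩,
      inf_inf_distrib_right a b c⟩
  -- `b ⊓ c ≤ b'` forces `b \ b' ∈ P`, hence `b = (b ⊓ b') ⊔ (b \ b') ∈ P`.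
  have hdisj : Disjoint (hF.toPFilter : Set A) hI.toIdeal := by
    rw [Set.disjoint_left]
    rintro x ⟨_, ⟨b, ⟨hbB, hbP⟩, rfl⟩, hbx⟩ ⟨b', ⟨hb'B, hb'P⟩, hxb'⟩
    have hsdiff : b \ b' ∈ P := hc _ (B.sdiff_mem hbB hb'B) <| by
      rw [eq_bot_iff, _root_.sdiff_eq, inf_right_comm]
      calc b ⊓ c ⊓ b'ᶜ ≤ b' ⊓ b'ᶜ := inf_le_inf_right _ (hbx.trans hxb')
        _ = ⊥ := inf_compl_self b'
    refine hbP ?_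
    rw [← sup_inf_sdiff b b']
    exact P.sup_mem (P.lower inf_le_right hb'P) hsdiff
  obtain ⟨J, hJ, hIJ, hFJ⟩ := DistribLattice.prime_ideal_of_disjoint_filter_ideal hdisj
  have hnotMem : ∀ b ∈ B, b ∉ P → b ⊓ c ∉ J := fun b hbB hbP hJb =>
    Set.disjoint_left.mp hFJ (subset_upperClosure ⟨b, ⟨hbB, hbP⟩, rfl⟩) hJb
  refine ⟨J, hJ, fun b hbB => ⟨fun hbJ => ?_, fun hbP => hIJ ⟨b, ⟨hbB, hbP⟩, le_rfl⟩⟩, ?_⟩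
  · by_contra hbP
    exact hnotMem b hbB hbP (J.lower inf_le_left hbJ)
  · simpa using hnotMem ⊤ B.top_mem hP.top_notMem

end Order.Ideal

open Order Ideal in
theorem BooleanSubalgebra.exists_isPrime_separating {A : Type*} [BooleanAlgebra A]
    (B : BooleanSubalgebra A) {r : A} (hr : r ∉ B) :
    ∃ J₁ J₂ : Ideal A, J₁.IsPrime ∧ J₂.IsPrime ∧ (∀ b ∈ B, b ∈ J₁ ↔ b ∈ J₂) ∧
      r ∉ J₁ ∧ r ∈ J₂ := by
  -- `P` contains every `b ∈ B` below `r` or below `rᶜ`, so it extends both to a prime ideal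
  -- missing `r` and to one missing `rᶜ`.
  have hI : IsIdeal (lowerClosure {b | b ∈ B ∧ b ⊓ r ∈ B} : Set A) := by
    refine SupClosed.isIdeal_lowerClosure ?_ ⟨⊥, B.bot_mem, by simp⟩
    rintro a ⟨haB, har⟩ b ⟨hbB, hbr⟩
    exact ⟨B.sup_mem haB hbB, by rw [inf_sup_right]; exact B.sup_mem har hbr⟩
  have hdisj : Disjoint (PFilter.principal (⊤ : A) : Set A) hI.toIdeal := by
    rw [Set.disjoint_left]
    rintro x (hx : ⊤ ≤ x) ⟨b, ⟨-, hbr⟩, hxb⟩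
    rw [top_le_iff.mp (hx.trans hxb)] at hbr
    exact hr (by simpa using hbr)
  obtain ⟨P, hP, hIP, -⟩ := DistribLattice.prime_ideal_of_disjoint_filter_ideal hdisj
  have hmem : ∀ b ∈ B, b ⊓ r ∈ B → b ∈ P := fun b hbB hbr => hIP ⟨b, ⟨hbB, hbr⟩, le_rfl⟩
  obtain ⟨J₁, hJ₁, hJ₁P, hrJ₁⟩ := hP.exists_isPrime_trace_eq_notMem B (c := r)
    fun b hbB hbr => hmem b hbB (by simp [hbr])
  obtain ⟨J₂, hJ₂, hJ₂P, hrJ₂⟩ := hP.exists_isPrime_trace_eq_notMem B (c := rᶜ)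
    fun b hbB hbr => hmem b hbB (by
      rwa [inf_eq_left.mpr (disjoint_compl_right_iff.mp (disjoint_iff.mpr hbr))])
  refine ⟨J₁, J₂, hJ₁, hJ₂, fun b hb => (hJ₁P b hb).trans (hJ₂P b hb).symm, hrJ₁, ?_⟩
  exact (hJ₂.inf_mem_iff.mp (by simp [J₂.bot_mem])).resolve_right hrJ₂

namespace StoneSpace

variable {A : Type u} [BooleanAlgebra A]

open Order Ideal Classical in
def ofIsPrime (J : Ideal A) (hJ : J.IsPrime) : StoneSpace A :=
  ⟨fun a => decide (a ∉ J), by simp [hJ.top_notMem], by simp [J.bot_mem],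
    fun a b => by simp [sup_mem_iff],
    fun a b => by simp [hJ.inf_mem_iff, not_or]⟩

@[simp]
lemma ofIsPrime_apply_eq_true (J : Order.Ideal A) (hJ : J.IsPrime) (a : A) :
    (ofIsPrime J hJ).1 a = true ↔ a ∉ J := by
  simp [ofIsPrime]

lemma exists_separating (B : BooleanSubalgebra A) {r : A} (hr : r ∉ B) :
    ∃ u v : StoneSpace A, (∀ b ∈ B, u.1 b = v.1 b) ∧ u.1 r = true ∧ v.1 r = false := by
  obtain ⟨J₁, J₂, hJ₁, hJ₂, hagree, hr₁, hr₂⟩ := B.exists_isPrime_separating hr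
  exact ⟨ofIsPrime J₁ hJ₁, ofIsPrime J₂ hJ₂, fun b hb => by
    rw [Bool.eq_iff_iff, ofIsPrime_apply_eq_true, ofIsPrime_apply_eq_true, hagree b hb],
    by simpa using hr₁, by simpa [← Bool.not_eq_true] using hr₂⟩

def indicator (a : A) : C(StoneSpace A, ℝ) where
  toFun u := if u.1 a then 1 else 0
  continuous_toFun :=
    (continuous_of_discreteTopology (f := fun b : Bool => if b then (1 : ℝ) else 0)).comp
      ((continuous_apply a).comp continuous_subtype_val)

@[simp]
lemma indicator_apply (a : A) (u : StoneSpace A) : indicator a u = if u.1 a then 1 else 0 :=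
  rfl

end StoneSpace

def boolGenSubalgebra {A : Type u} [BooleanAlgebra A] (s : Set A) : BooleanSubalgebra A where
  carrier := boolGen s
  supClosed' _ hx _ hy t ht := ht.2.2.2.2.1 _ (hx t ht) _ (hy t ht)
  infClosed' _ hx _ hy t ht := ht.2.2.2.2.2 _ (hx t ht) _ (hy t ht)
  compl_mem' hx t ht := ht.2.2.2.1 _ (hx t ht)
  bot_mem' _ ht := ht.2.1

lemma subset_boolGen {A : Type u} [BooleanAlgebra A] (s : Set A) : s ⊆ boolGen s :=
  fun _ hx _ ht => ht.1 hx

lemma ContinuousMap.notMem_closure_adjoin_of_separates {K : Type*} [TopologicalSpace K]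
    {f : C(K, ℝ)} {G : Set C(K, ℝ)} {u v : K} (hf : f u ≠ f v) (hG : ∀ g ∈ G, g u = g v) :
    f ∉ closure (Algebra.adjoin ℝ G : Set C(K, ℝ)) := by
  let E := AlgHom.equalizer (evalAlgHom ℝ ℝ u) (evalAlgHom ℝ ℝ v)
  have hclosed : IsClosed (E : Set C(K, ℝ)) :=
    isClosed_eq (continuous_eval_const u) (continuous_eval_const v)
  have hle : Algebra.adjoin ℝ G ≤ E := Algebra.adjoin_le hG
  exact fun hmem => hf (closure_minimal hle hclosed hmem)

lemma Cardinal.sSup_mk_le_sSup_mk {α β : Type u} {p : Set α → Prop} {q : Set β → Prop}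
    (h : ∀ s, p s → ∃ t, q t ∧ #s ≤ #t) :
    sSup {c | ∃ s, p s ∧ c = #s} ≤ sSup {c | ∃ t, q t ∧ c = #t} := by
  refine csSup_le' ?_
  rintro _ ⟨s, hs, rfl⟩
  obtain ⟨t, ht, hst⟩ := h s hs
  exact le_csSup_of_le ⟨#β, by rintro _ ⟨t, -, rfl⟩; exact mk_set_le t⟩ ⟨t, ht, rfl⟩ hst

open StoneSpace in
lemma irrBool_le_irrBaA_stoneSpace (A : Type u) [BooleanAlgebra A] :
    irrBool A ≤ irrBaA (StoneSpace A) := by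
  refine sSup_mk_le_sSup_mk fun R hR => ?_
  have hsep : ∀ r ∈ R, ∃ u v : StoneSpace A,
      (∀ s ∈ R \ {r}, indicator s u = indicator s v) ∧ indicator r u ≠ indicator r v := by
    intro r hr
    obtain ⟨u, v, huv, hu, hv⟩ := exists_separating (boolGenSubalgebra (R \ {r})) (hR r hr)
    exact ⟨u, v, fun s hs => by simp [huv s (subset_boolGen _ hs)], by simp [hu, hv]⟩
  refine ⟨indicator '' R, ?_, (mk_image_eq_of_injOn _ _ ?_).ge⟩
  · rintro _ ⟨r, hr, rfl⟩
    obtain ⟨u, v, huv, hruv⟩ := hsep r hr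
    refine ContinuousMap.notMem_closure_adjoin_of_separates hruv ?_
    rintro _ ⟨⟨s, hs, rfl⟩, hsr⟩
    exact huv s ⟨hs, fun h => hsr (h ▸ rfl)⟩
  · intro r hr s hs hrs
    by_contra hne
    obtain ⟨u, v, huv, hruv⟩ := hsep r hr
    exact hruv (hrs ▸ huv s ⟨hs, fun h => hne h.symm⟩)

lemma irrBaA_le_irrBaS (K : Type u) [TopologicalSpace K] : irrBaA K ≤ irrBaS C(K, ℝ) :=
  sSup_mk_le_sSup_mk fun F hF => ⟨F, fun f hf hmem => hF f hf <|
    closure_mono (fun _ hx => Algebra.span_le_adjoin ℝ _ hx) hmem, le_rfl⟩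

theorem stmt14_general (A : Type u) [BooleanAlgebra A]
    (K : Type u) [TopologicalSpace K] :
    irrBool A ≤ irrBaA (StoneSpace A) ∧
      irrBaA (StoneSpace A) ≤ irrBaS C(StoneSpace A, ℝ) ∧
      irrBaA K ≤ irrBaS C(K, ℝ) :=
  ⟨irrBool_le_irrBaA_stoneSpace A, irrBaA_le_irrBaS _, irrBaA_le_irrBaS K⟩

/-- For a Boolean algebra `A` with Stone space `K_A` and any compact Hausdorff
space `K`: `irr(A) ≤ irr_{BaA}(C(K_A)) ≤ irr_{BaS}(C(K_A))` and
`irr_{BaA}(C(K)) ≤ irr_{BaS}(C(K))`. -/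
theorem stmt14 (A : Type u) [BooleanAlgebra A]
    (K : Type u) [TopologicalSpace K] [CompactSpace K] [T2Space K] :
    irrBool A ≤ irrBaA (StoneSpace A) ∧
      irrBaA (StoneSpace A) ≤ irrBaS C(StoneSpace A, ℝ) ∧
      irrBaA K ≤ irrBaS C(K, ℝ) :=
  stmt14_general A K

end
end

section
/- Let K be a compact Hausdorff space. A family F ⊆ C(K) is irredundant with respect to closed subalgebras if and only if for each f ∈ F there exist points x_f, y_f ∈ K such that f(x_f) − f(y_f) > 0 and g(x_f) − g(y_f) = 0 for every g ∈ F with g ≠ f. In particular, irr_{BaA}(C(K)) = nbiort_2(K). -/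
open Cardinal Set Topology

universe u

noncomputable section

/-- A nice biorthogonal system in `C(K)`: a biorthogonal system whose functionals have
the form `δ_{x_i} - δ_{y_i}`. -/
def IsNiceBiorthSys (K : Type u) [TopologicalSpace K] {I : Type u}
    (f : I → C(K, ℝ)) (x y : I → K) : Prop :=
  (∀ i, f i (x i) - f i (y i) = 1) ∧ ∀ i j, i ≠ j → f i (x j) - f i (y j) = 0

/-- `nbiort2 K`: the supremum of cardinalities of nice biorthogonal systems in `C(K)`. -/
def nbiort2 (K : Type u) [TopologicalSpace K] : Cardinal.{u} :=
  sSup {c | ∃ (I : Type u) (f : I → C(K, ℝ)) (x y : I → K),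
    IsNiceBiorthSys K f x y ∧ c = #I}

/-- If `f` is constant on every pair on which all members of `S` agree, then `f` lies in the
closure of the subalgebra generated by `S`. -/
lemma key_mem_closure {K : Type u} [TopologicalSpace K] [CompactSpace K]
    (S : Set C(K, ℝ)) (f : C(K, ℝ))
    (hf : ∀ x y : K, (∀ g ∈ S, g x = g y) → f x = f y) :
    f ∈ closure ((Algebra.adjoin ℝ S : Subalgebra ℝ C(K, ℝ)) : Set C(K, ℝ)) := by
  classical
  let Φ : C(K, S → ℝ) := ⟨fun x g => (g : C(K, ℝ)) x,
    continuous_pi fun g => (g : C(K, ℝ)).continuous⟩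
  let L : Set (S → ℝ) := Set.range Φ
  haveI : CompactSpace L := isCompact_iff_compactSpace.mp (isCompact_range Φ.continuous)
  let Φ' : C(K, L) := ⟨fun x => ⟨Φ x, Set.mem_range_self x⟩, Φ.continuous.subtype_mk _⟩
  have hsurj : Function.Surjective Φ' := by
    rintro ⟨p, x, hx⟩; exact ⟨x, Subtype.ext hx⟩
  have hq : IsQuotientMap Φ' := (Φ'.continuous.isClosedMap).isQuotientMap Φ'.continuous hsurj
  -- the descended function
  have hwd : ∀ x y : K, Φ x = Φ y → f x = f y := by
    intro x y h
    refine hf x y fun g hg => ?_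
    exact congrFun h ⟨g, hg⟩
  let fb : L → ℝ := fun p => f (Classical.choose p.2)
  have hcomp : ∀ x : K, fb (Φ' x) = f x := by
    intro x
    exact hwd _ x (Classical.choose_spec (Φ' x).2)
  have hfbcont : Continuous fb := by
    rw [hq.continuous_iff]
    have : fb ∘ Φ' = f := funext hcomp
    rw [this]; exact f.continuous
  let fbC : C(L, ℝ) := ⟨fb, hfbcont⟩
  -- coordinate functions
  let c : S → C(L, ℝ) := fun g => ⟨fun p => p.1 g, (continuous_apply g).comp continuous_subtype_val⟩
  let A : Subalgebra ℝ C(L, ℝ) := Algebra.adjoin ℝ (Set.range c)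
  have hsep : A.SeparatesPoints := by
    intro p q hpq
    have : p.1 ≠ q.1 := fun h => hpq (Subtype.ext h)
    obtain ⟨g, hg⟩ : ∃ g, p.1 g ≠ q.1 g := by
      by_contra h; push_neg at h; exact this (funext h)
    exact ⟨(c g : L → ℝ), ⟨c g, Algebra.subset_adjoin (Set.mem_range_self g), rfl⟩, hg⟩
  have hmem : fbC ∈ closure (A : Set C(L, ℝ)) := by
    have := ContinuousMap.continuousMap_mem_subalgebra_closure_of_separatesPoints A hsep fbC
    exact this
  -- pull back along Φ'
  let T : C(L, ℝ) →ₐ[ℝ] C(K, ℝ) := ContinuousMap.compRightAlgHom ℝ ℝ Φ'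
  have hTf : T fbC = f := ContinuousMap.ext hcomp
  have himg : T '' (A : Set C(L, ℝ)) = ((Algebra.adjoin ℝ S : Subalgebra ℝ C(K, ℝ)) : Set C(K, ℝ)) := by
    have h1 : (A.map T : Subalgebra ℝ C(K, ℝ)) = Algebra.adjoin ℝ (T '' Set.range c) :=
      AlgHom.map_adjoin T (Set.range c)
    have h2 : T '' Set.range c = S := by
      rw [← Set.range_comp]
      have : (T ∘ c) = fun g : S => (g : C(K, ℝ)) := by
        funext g; exact ContinuousMap.ext fun x => rfl
      rw [this, Subtype.range_coe]
    calc T '' (A : Set C(L, ℝ)) = ((A.map T : Subalgebra ℝ C(K, ℝ)) : Set C(K, ℝ)) := rfl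
      _ = _ := by rw [h1, h2]
  have : T fbC ∈ closure (T '' (A : Set C(L, ℝ))) :=
    (image_closure_subset_closure_image (ContinuousMap.compRightAlgHom_continuous ℝ ℝ Φ'))
      (Set.mem_image_of_mem T hmem)
  rw [hTf, himg] at this
  exact this

/-- Conversely, a separating pair of points witnesses non-membership. -/
lemma notin_closure_of_pair {K : Type u} [TopologicalSpace K]
    (S : Set C(K, ℝ)) (f : C(K, ℝ)) (x y : K) (hne : f x ≠ f y)
    (h0 : ∀ g ∈ S, g x = g y) :
    f ∉ closure ((Algebra.adjoin ℝ S : Subalgebra ℝ C(K, ℝ)) : Set C(K, ℝ)) := by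
  intro hmem
  set E : Subalgebra ℝ C(K, ℝ) :=
    AlgHom.equalizer (ContinuousMap.evalAlgHom ℝ ℝ x) (ContinuousMap.evalAlgHom ℝ ℝ y) with hE
  have hle : (Algebra.adjoin ℝ S : Subalgebra ℝ C(K, ℝ)) ≤ E :=
    Algebra.adjoin_le fun g hg => h0 g hg
  have hclosed : IsClosed (E : Set C(K, ℝ)) :=
    isClosed_eq (continuous_eval_const x) (continuous_eval_const y)
  have : f ∈ (E : Set C(K, ℝ)) := (closure_minimal hle hclosed) hmem
  exact hne this


/-- For a compact Hausdorff space `K`, a family `F ⊆ C(K)` is irredundant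
with respect to closed subalgebras iff for each `f ∈ F` there are `x_f, y_f ∈ K` with
`f(x_f) - f(y_f) > 0` and `g(x_f) - g(y_f) = 0` for all `g ∈ F`, `g ≠ f`.
In particular `irr_{BaA}(C(K)) = nbiort₂(K)`. -/
theorem stmt16 (K : Type u) [TopologicalSpace K] [CompactSpace K] [T2Space K] :
    (∀ F : Set C(K, ℝ),
      (∀ f ∈ F, f ∉ closure
        ((Algebra.adjoin ℝ (F \ {f}) : Subalgebra ℝ C(K, ℝ)) : Set C(K, ℝ))) ↔
      (∀ f ∈ F, ∃ x y : K, 0 < f x - f y ∧ ∀ g ∈ F, g ≠ f → g x - g y = 0)) ∧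
    irrBaA K = nbiort2 K := by
  classical
  have part1 : ∀ F : Set C(K, ℝ),
      (∀ f ∈ F, f ∉ closure
        ((Algebra.adjoin ℝ (F \ {f}) : Subalgebra ℝ C(K, ℝ)) : Set C(K, ℝ))) ↔
      (∀ f ∈ F, ∃ x y : K, 0 < f x - f y ∧ ∀ g ∈ F, g ≠ f → g x - g y = 0) := by
    intro F
    constructor
    · intro h f hf
      by_contra hcon
      push_neg at hcon
      apply h f hf
      apply key_mem_closure
      intro x y hxy
      by_contra hne
      rcases lt_or_gt_of_ne hne with h1 | h1
      · obtain ⟨g, hgF, hgne, hgval⟩ := hcon y x (by linarith)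
        exact hgval (by rw [hxy g ⟨hgF, hgne⟩]; ring)
      · obtain ⟨g, hgF, hgne, hgval⟩ := hcon x y (by linarith)
        exact hgval (by rw [hxy g ⟨hgF, hgne⟩]; ring)
    · intro h f hf
      obtain ⟨x, y, hpos, hzero⟩ := h f hf
      exact notin_closure_of_pair _ f x y (ne_of_gt (by linarith : f y < f x))
        (fun g hg => sub_eq_zero.mp (hzero g hg.1 hg.2))
  refine ⟨part1, ?_⟩
  unfold irrBaA nbiort2
  congr 1
  ext c
  constructor
  · rintro ⟨F, hF, rfl⟩
    have h := (part1 F).mp hF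
    choose x y hpos hzero using fun i : F => h i i.2
    set fI : F → C(K, ℝ) :=
      fun i => (((i : C(K, ℝ)) (x i) - (i : C(K, ℝ)) (y i))⁻¹) • (i : C(K, ℝ)) with hfI
    refine ⟨F, fI, x, y, ⟨?_, ?_⟩, rfl⟩
    · intro i
      have hd : (i : C(K, ℝ)) (x i) - (i : C(K, ℝ)) (y i) ≠ 0 := (hpos i).ne'
      simp only [hfI, ContinuousMap.smul_apply, smul_eq_mul]
      rw [← mul_sub, inv_mul_cancel₀ hd]
    · intro i j hij
      have hne : (i : C(K, ℝ)) ≠ (j : C(K, ℝ)) := fun h' => hij (Subtype.ext h')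
      have h0 : (i : C(K, ℝ)) (x j) - (i : C(K, ℝ)) (y j) = 0 :=
        hzero j (i : C(K, ℝ)) i.2 hne
      simp only [hfI, ContinuousMap.smul_apply, smul_eq_mul]
      rw [← mul_sub, h0, mul_zero]
  · rintro ⟨I, f, x, y, ⟨h1, h2⟩, rfl⟩
    have hinj : Function.Injective f := by
      intro i j hij
      by_contra hne
      have h0 := h2 i j hne
      rw [hij] at h0
      exact one_ne_zero ((h1 j).symm.trans h0)
    refine ⟨Set.range f, (part1 _).mpr ?_, (Cardinal.mk_range_eq f hinj).symm⟩
    rintro g ⟨i, rfl⟩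
    refine ⟨x i, y i, by rw [h1 i]; norm_num, ?_⟩
    rintro g' ⟨j, rfl⟩ hne
    exact h2 j i (fun h' => hne (by rw [h']))


end
end
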